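/- arXiv:1911.04132 — 5 statements merged into one kernel-verified Lean document; each statement's English description precedes it below -/
import Mathlib

section
/- Partition {1, …, k} into the maximal intervals of consecutive integers on which the sequence b is constant. Then there exist unique positive real constants C_{[p,q]}, one for each maximal constant interval [p, q] of b satisfying a_p > b_p and b_q > a_{q+1}, with the following property: a vector z = (z₁, …, z_k) ∈ ℂ^k belongs to Ã_{k+1}(a, b) if and only if for every maximal constant interval [p, q] of b, either a_p > b_p and b_q > a_{q+1} and Σ_{i=p}^{q} |z_i|² = C_{[p,q]}, or else (i.e., if a_p = b_p or b_q = a_{q+1}) z_i = 0 for all p ≤ i ≤ q. In particular, Ã_{k+1}(a, b) is a product of odd-dimensional spheres. -/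
open Polynomial

/-- The `(k+1) × (k+1)` Hermitian "arrow" matrix whose upper-left `k × k` block is
`diag(b 1, …, b k)`, whose `(i, k+1)` entry is `conj (z i)` and `(k+1, i)` entry is `z i`
for `1 ≤ i ≤ k` (1-based indexing of the sequences), and whose `(k+1, k+1)` entry is `w`. -/
def Zarrow (k : ℕ) (b : ℕ → ℝ) (w : ℝ) (z : ℕ → ℂ) :
    Matrix (Fin (k + 1)) (Fin (k + 1)) ℂ :=
  Matrix.of fun i j =>
    if (i : ℕ) < k then
      if (j : ℕ) < k then (if i = j then (b ((i : ℕ) + 1) : ℂ) else 0)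
      else (starRingEnd ℂ) (z ((i : ℕ) + 1))
    else
      if (j : ℕ) < k then z ((j : ℕ) + 1)
      else (w : ℂ)

/-- The matrix `Z_{(a,b)}(z)`: the arrow matrix with corner entry
`z_{k+1} = Σ_{i=1}^{k+1} aᵢ − Σ_{i=1}^{k} bᵢ`. -/
def Zab (k : ℕ) (a b : ℕ → ℝ) (z : ℕ → ℂ) : Matrix (Fin (k + 1)) (Fin (k + 1)) ℂ :=
  Zarrow k b ((∑ i ∈ Finset.Icc 1 (k + 1), a i) - ∑ i ∈ Finset.Icc 1 k, b i) z

/-- `Ã_{k+1}(a, b)`: those `z` (with relevant coordinates `z 1, …, z k`) for which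
`Z_{(a,b)}(z)` has characteristic polynomial `∏_{i=1}^{k+1}(X − aᵢ)`. -/
def Atilde (k : ℕ) (a b : ℕ → ℝ) : Set (ℕ → ℂ) :=
  {z | (Zab k a b z).charpoly = ∏ i ∈ Finset.Icc 1 (k + 1), (X - C (a i : ℂ))}

/-- `[p, q] ⊆ {1, …, k}` is a maximal interval of consecutive indices on which the
(1-based) sequence `b` is constant. -/
def IsMaxConstInterval (k : ℕ) (b : ℕ → ℝ) (p q : ℕ) : Prop :=
  1 ≤ p ∧ p ≤ q ∧ q ≤ k ∧ (∀ m, p ≤ m → m ≤ q → b m = b p) ∧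
    (p = 1 ∨ b (p - 1) ≠ b p) ∧ (q = k ∨ b q ≠ b (q + 1))

/-!
Expanding the determinant of the arrow matrix (a Schur complement) gives
`charpoly Z = (X - z_{k+1}) ∏ⱼ (X - bⱼ) - ∑ᵢ |zᵢ|² ∏_{j ≠ i} (X - bⱼ)`, and comparing traces shows
that `charpoly Z - ∏ᵢ (X - aᵢ)` has degree `< k`. Hence `z ∈ Ã` iff `∏ⱼ (X - bⱼ)` divides this
difference, i.e. iff `(X - v) ^ (q - p + 1)` divides it for every maximal constant interval
`[p, q]` of `b`, with value `v = b_p`. Interlacing forces `aᵢ = v` for `p < i ≤ q`, so both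
characteristic polynomials carry the factor `(X - v) ^ (q - p)`; after cancelling it the condition
is a single evaluation at `v`, which reads `∑_{i=p}^{q} |zᵢ|² = blockConst k a b p q`. The signs of
the factors of `blockConst` are dictated by interlacing: it is positive in the nondegenerate case
and vanishes otherwise.
-/

open Matrix Finset

theorem det_fromBlocks_diagonal_replicateCol_replicateRow {K ι : Type*} [Field K] [Fintype ι]
    [DecidableEq ι] {d : ι → K} (hd : ∀ i, d i ≠ 0) (u v : ι → K) (c : K) :
    (fromBlocks (diagonal d) (replicateCol (Fin 1) u) (replicateRow (Fin 1) v)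
      (diagonal fun _ => c)).det = c * ∏ i, d i - ∑ i, v i * u i * ∏ j ∈ univ.erase i, d j := by
  have : Invertible (diagonal d) :=
    invertibleOfIsUnitDet _ (by simpa [det_diagonal, isUnit_iff_ne_zero, prod_ne_zero_iff])
  have hinv : ⅟(diagonal d) = diagonal d⁻¹ := by
    refine invOf_eq_right_inv ?_
    rw [diagonal_mul_diagonal, ← diagonal_one]
    exact congrArg diagonal (funext fun i => mul_inv_cancel₀ (hd i))
  rw [det_fromBlocks₁₁, hinv, det_diagonal, det_unique]
  simp only [Matrix.sub_apply, diagonal_apply_eq, Matrix.mul_apply, replicateRow_apply,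
    replicateCol_apply, diagonal_apply, mul_ite, mul_zero, sum_ite_eq', mem_univ, if_true,
    Pi.inv_apply, mul_sub, mul_sum]
  congr 1
  · ring
  refine sum_congr rfl fun i _ => ?_
  rw [← mul_prod_erase univ d (mem_univ i)]
  field_simp [hd i]

theorem charpoly_fromBlocks_diagonal_replicateCol_replicateRow {R ι : Type*} [CommRing R]
    [IsDomain R] [Fintype ι] [DecidableEq ι] (d u v : ι → R) (c : R) :
    (fromBlocks (diagonal d) (replicateCol (Fin 1) u) (replicateRow (Fin 1) v)
      (diagonal fun _ => c)).charpoly =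
      (X - C c) * ∏ i, (X - C (d i)) - ∑ i, C (v i * u i) * ∏ j ∈ univ.erase i, (X - C (d j)) := by
  apply IsFractionRing.injective R[X] (FractionRing R[X])
  set φ := algebraMap R[X] (FractionRing R[X])
  have hd : ∀ i, φ (X - C (d i)) ≠ 0 := fun i =>
    (map_ne_zero_iff φ (IsFractionRing.injective _ _)).2 (X_sub_C_ne_zero _)
  have key := det_fromBlocks_diagonal_replicateCol_replicateRow hd (fun i => -φ (C (u i)))
    (fun i => -φ (C (v i))) (φ (X - C c))
  have hB : (-(replicateCol (Fin 1) u).map C).map φ = replicateCol (Fin 1) fun i => -φ (C (u i)) :=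
    by ext; simp
  have hC : (-(replicateRow (Fin 1) v).map C).map φ = replicateRow (Fin 1) fun i => -φ (C (v i)) :=
    by ext; simp
  rw [charpoly, RingHom.map_det, charmatrix_fromBlocks, charmatrix_diagonal, charmatrix_diagonal,
    RingHom.mapMatrix_apply, fromBlocks_map, diagonal_map (map_zero _), diagonal_map (map_zero _)]
  rw [hB, hC, key]
  simp [map_sub, map_mul, map_prod, map_sum]

theorem Polynomial.degree_sub_lt_of_nextCoeff_eq {R : Type*} [CommRing R] {p q : R[X]} {n : ℕ}
    (hp : p.Monic) (hq : q.Monic) (hpn : p.natDegree = n + 1) (hqn : q.natDegree = n + 1)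
    (h : p.nextCoeff = q.nextCoeff) : (p - q).degree < n := by
  rw [degree_lt_iff_coeff_zero]
  intro m hm
  rw [coeff_sub, sub_eq_zero]
  obtain rfl | rfl | hm := show m = n ∨ m = n + 1 ∨ n + 1 < m by omega
  · rwa [nextCoeff_of_natDegree_pos (by omega), nextCoeff_of_natDegree_pos (by omega), hpn, hqn]
      at h
  · rw [← hpn, hp.coeff_natDegree, hpn, ← hqn, hq.coeff_natDegree]
  · rw [coeff_eq_zero_of_natDegree_lt (by omega), coeff_eq_zero_of_natDegree_lt (by omega)]

theorem Finset.prod_eq_pow_card_mul_prod_sdiff {ι M : Type*} [CommMonoid M] [DecidableEq ι]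
    {s t : Finset ι} {f : ι → M} {x : M} (ht : t ⊆ s) (hf : ∀ i ∈ t, f i = x) :
    ∏ i ∈ s, f i = x ^ #t * ∏ i ∈ s \ t, f i := by
  rw [← prod_sdiff ht, prod_eq_pow_card hf, mul_comm]

theorem Finset.pow_card_dvd_sum_mul_prod_erase_sub {ι R : Type*} [CommRing R] [DecidableEq ι]
    {s t : Finset ι} {f : ι → R} {x : R} (ht : t ⊆ s) (hf : ∀ i ∈ t, f i = x) (c : ι → R) :
    x ^ #t ∣ ∑ i ∈ s, c i * ∏ j ∈ s.erase i, f j -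
      (∑ i ∈ t, c i) * x ^ (#t - 1) * ∏ j ∈ s \ t, f j := by
  have hinner : ∀ i ∈ t, c i * ∏ j ∈ s.erase i, f j = c i * x ^ (#t - 1) * ∏ j ∈ s \ t, f j := by
    intro i hi
    have hsd : s.erase i \ t.erase i = s \ t := by
      ext j; by_cases j = i <;> simp_all
    rw [prod_eq_pow_card_mul_prod_sdiff (erase_subset_erase i ht)
      (fun j hj => hf j (mem_of_mem_erase hj)), card_erase_of_mem hi, hsd, mul_assoc]
  rw [← sum_sdiff ht, sum_congr rfl hinner, ← sum_mul, ← sum_mul, add_sub_cancel_right]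
  refine dvd_sum fun i hi => ?_
  rw [prod_eq_pow_card_mul_prod_sdiff (subset_erase.2 ⟨ht, (mem_sdiff.1 hi).2⟩) hf]
  exact dvd_mul_of_dvd_right (dvd_mul_right _ _) _

theorem Polynomial.X_sub_C_pow_succ_dvd_pow_mul_iff {R : Type*} [CommRing R] [IsDomain R]
    {x : R} {f : R[X]} (n : ℕ) : (X - C x) ^ (n + 1) ∣ (X - C x) ^ n * f ↔ f.IsRoot x := by
  rw [pow_succ, mul_dvd_mul_iff_left (pow_ne_zero _ (X_sub_C_ne_zero x)), dvd_iff_isRoot]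

theorem Zarrow_eq_reindex (k : ℕ) (b : ℕ → ℝ) (w : ℝ) (z : ℕ → ℂ) :
    Zarrow k b w z = reindex finSumFinEquiv finSumFinEquiv
      (fromBlocks (diagonal fun i : Fin k => (b (i + 1) : ℂ))
        (replicateCol (Fin 1) fun i => (starRingEnd ℂ) (z (i + 1)))
        (replicateRow (Fin 1) fun j => z (j + 1)) (diagonal fun _ => (w : ℂ))) := by
  ext i j
  induction i using Fin.lastCases <;> induction j using Fin.lastCases <;>
    simp [Zarrow, diagonal_apply]

theorem Fin.map_univ_val_add_one (k : ℕ) :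
    (univ : Finset (Fin k)).map (Fin.valEmbedding.trans (addRightEmbedding 1)) = Icc 1 k := by
  ext n
  simp only [mem_map, mem_univ, true_and, Function.Embedding.trans_apply, Fin.valEmbedding_apply,
    addRightEmbedding_apply, mem_Icc]
  exact ⟨fun ⟨i, hi⟩ => by omega, fun h => ⟨⟨n - 1, by omega⟩, by simp; omega⟩⟩

theorem charpoly_Zarrow (k : ℕ) (b : ℕ → ℝ) (w : ℝ) (z : ℕ → ℂ) :
    (Zarrow k b w z).charpoly = (X - C (w : ℂ)) * ∏ i ∈ Icc 1 k, (X - C (b i : ℂ)) -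
      ∑ i ∈ Icc 1 k, C (Complex.normSq (z i) : ℂ) * ∏ j ∈ (Icc 1 k).erase i, (X - C (b j : ℂ)) := by
  rw [Zarrow_eq_reindex, charpoly_reindex, charpoly_fromBlocks_diagonal_replicateCol_replicateRow,
    ← Fin.map_univ_val_add_one, prod_map, sum_map]
  simp_rw [← map_erase, prod_map]
  simp [Complex.mul_conj]

theorem nextCoeff_charpoly_Zarrow (k : ℕ) (b : ℕ → ℝ) (w : ℝ) (z : ℕ → ℂ) :
    (Zarrow k b w z).charpoly.nextCoeff = -((w : ℂ) + ∑ i ∈ Icc 1 k, (b i : ℂ)) := by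
  rw [Zarrow_eq_reindex, charpoly_reindex, ← neg_neg (nextCoeff _),
    ← trace_eq_neg_charpoly_nextCoeff, ← Fin.map_univ_val_add_one, sum_map]
  simp [trace, Fintype.sum_sum_type, add_comm]

theorem degree_charpoly_Zab_sub_lt (k : ℕ) (a b : ℕ → ℝ) (z : ℕ → ℂ) :
    ((Zab k a b z).charpoly - ∏ i ∈ Icc 1 (k + 1), (X - C (a i : ℂ))).degree < k := by
  refine degree_sub_lt_of_nextCoeff_eq (charpoly_monic _) (monic_prod_X_sub_C _ _)
    (by simp) (by simp) ?_
  rw [Zab, nextCoeff_charpoly_Zarrow, prod_X_sub_C_nextCoeff]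
  push_cast
  ring

def Interlaces (k : ℕ) (a b : ℕ → ℝ) : Prop :=
  ∀ i, 1 ≤ i → i ≤ k → b i ≤ a i ∧ a (i + 1) ≤ b i

namespace Interlaces

variable {k : ℕ} {a b : ℕ → ℝ}

theorem antitoneOn_right (h : Interlaces k a b) : AntitoneOn b (Set.Icc 1 k) := by
  intro i hi j hj hij
  induction j, hij using Nat.le_induction with
  | base => rfl
  | succ n hin ih =>
    calc b (n + 1) ≤ a (n + 1) := (h (n + 1) (by omega) hj.2).1
      _ ≤ b n := (h n (by grind) (by grind)).2
      _ ≤ b i := ih ⟨by grind, by grind⟩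

theorem antitoneOn_left (h : Interlaces k a b) : AntitoneOn a (Set.Icc 1 (k + 1)) := by
  intro i hi j hj hij
  induction j, hij using Nat.le_induction with
  | base => rfl
  | succ n hin ih =>
    calc a (n + 1) ≤ b n := (h n (by grind) (by grind)).2
      _ ≤ a n := (h n (by grind) (by grind)).1
      _ ≤ a i := ih ⟨by grind, by grind⟩

end Interlaces

namespace IsMaxConstInterval

variable {k : ℕ} {b : ℕ → ℝ} {p q : ℕ}

theorem unique_right {q' : ℕ} (hI : IsMaxConstInterval k b p q)
    (hI' : IsMaxConstInterval k b p q') : q = q' := by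
  obtain ⟨-, hpq, hqk, hc, -, hq⟩ := hI
  obtain ⟨-, hpq', hqk', hc', -, hq'⟩ := hI'
  by_contra hne
  rcases Nat.lt_or_gt_of_ne hne with h | h
  · exact hq.resolve_left (by omega)
      ((hc' q hpq (by omega)).trans (hc' (q + 1) (by omega) h).symm)
  · exact hq'.resolve_left (by omega)
      ((hc q' hpq' (by omega)).trans (hc (q' + 1) (by omega) h).symm)

theorem not_isMaxConstInterval_of_lt {i q' : ℕ} (hI : IsMaxConstInterval k b p q) (hpi : p < i)
    (hiq : i ≤ q) : ¬IsMaxConstInterval k b i q' := by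
  obtain ⟨hp, -, -, hc, -, -⟩ := hI
  exact fun hI' => (hI'.2.2.2.2.1.resolve_left (by omega))
    ((hc (i - 1) (by omega) (by omega)).trans (hc i hpi.le hiq).symm)

theorem apply_lt_of_lt_left (hb : AntitoneOn b (Set.Icc 1 k)) (hI : IsMaxConstInterval k b p q)
    {j : ℕ} (hj : 1 ≤ j) (hjp : j < p) : b p < b j := by
  obtain ⟨hp, hpq, hqk, -, hl, -⟩ := hI
  have hne : b (p - 1) ≠ b p := hl.resolve_left (by omega)
  calc b p < b (p - 1) := (hb ⟨by omega, by omega⟩ ⟨hp, by omega⟩ (by omega)).lt_of_ne' hne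
    _ ≤ b j := hb ⟨hj, by omega⟩ ⟨by omega, by omega⟩ (by omega)

theorem apply_lt_of_right_lt (hb : AntitoneOn b (Set.Icc 1 k)) (hI : IsMaxConstInterval k b p q)
    {j : ℕ} (hqj : q < j) (hjk : j ≤ k) : b j < b p := by
  obtain ⟨hp, hpq, hqk, hc, -, hr⟩ := hI
  have hne : b q ≠ b (q + 1) := hr.resolve_left (by omega)
  calc b j ≤ b (q + 1) := hb ⟨by omega, by omega⟩ ⟨by omega, hjk⟩ (by omega)
    _ < b q := (hb ⟨by omega, hqk⟩ ⟨by omega, by omega⟩ (by omega)).lt_of_ne hne.symm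
    _ = b p := hc q hpq le_rfl

theorem filter_eq_Icc (hb : AntitoneOn b (Set.Icc 1 k)) (hI : IsMaxConstInterval k b p q) :
    {j ∈ Icc 1 k | b j = b p} = Icc p q := by
  ext j
  simp only [mem_filter, mem_Icc]
  constructor
  · rintro ⟨⟨hj, hjk⟩, hbj⟩
    by_contra h
    rcases not_and_or.1 h with h | h
    · exact (hI.apply_lt_of_lt_left hb hj (by omega)).ne' hbj
    · exact (hI.apply_lt_of_right_lt hb (by omega) hjk).ne hbj
  · rintro ⟨hpj, hjq⟩
    exact ⟨⟨by have := hI.1; omega, by have := hI.2.2.1; omega⟩, hI.2.2.2.1 j hpj hjq⟩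

theorem left_apply_eq {a : ℕ → ℝ} (hab : Interlaces k a b) (hI : IsMaxConstInterval k b p q)
    {i : ℕ} (hpi : p < i) (hiq : i ≤ q) : a i = b p := by
  obtain ⟨hp, -, hqk, hc, -, -⟩ := hI
  have h₁ := (hab i (by omega) (by omega)).1
  have h₂ := (hab (i - 1) (by omega) (by omega)).2
  rw [Nat.sub_add_cancel (by omega)] at h₂
  linarith [hc i hpi.le hiq, hc (i - 1) (by omega) (by omega)]

theorem prod_sub_ne_zero (hb : AntitoneOn b (Set.Icc 1 k)) (hI : IsMaxConstInterval k b p q) :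
    ∏ j ∈ Icc 1 k \ Icc p q, (b p - b j) ≠ 0 := by
  refine prod_ne_zero_iff.2 fun j hj => sub_ne_zero.2 ?_
  simp only [mem_sdiff, mem_Icc, not_and_or, not_le] at hj
  rcases hj with ⟨⟨hj, hjk⟩, hjp | hqj⟩
  · exact (hI.apply_lt_of_lt_left hb hj hjp).ne
  · exact (hI.apply_lt_of_right_lt hb hqj hjk).ne'

end IsMaxConstInterval

theorem exists_isMaxConstInterval {k : ℕ} {b : ℕ → ℝ} (hb : AntitoneOn b (Set.Icc 1 k)) {i : ℕ}
    (hi : i ∈ Icc 1 k) : ∃ p q, IsMaxConstInterval k b p q ∧ b p = b i := by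
  set t := {j ∈ Icc 1 k | b j = b i}
  have ht : t.Nonempty := ⟨i, mem_filter.2 ⟨hi, rfl⟩⟩
  have hmin := mem_filter.1 (t.min'_mem ht)
  have hmax := mem_filter.1 (t.max'_mem ht)
  simp only [mem_Icc] at hmin hmax
  refine ⟨t.min' ht, t.max' ht, ⟨hmin.1.1, t.min'_le _ (t.max'_mem ht), hmax.1.2, ?_, ?_, ?_⟩,
    hmin.2⟩
  · intro m h₁ h₂
    refine le_antisymm (hb ⟨hmin.1.1, hmin.1.2⟩ ⟨by omega, by omega⟩ h₁) ?_
    calc b (t.min' ht) = b (t.max' ht) := hmin.2.trans hmax.2.symm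
      _ ≤ b m := hb ⟨by omega, by omega⟩ ⟨hmax.1.1, hmax.1.2⟩ h₂
  · by_contra! h
    have : t.min' ht - 1 ∈ t := mem_filter.2 ⟨mem_Icc.2 ⟨by omega, by omega⟩, h.2.trans hmin.2⟩
    have := t.min'_le _ this
    omega
  · by_contra! h
    have : t.max' ht + 1 ∈ t := mem_filter.2 ⟨mem_Icc.2 ⟨by omega, by omega⟩, h.2.symm.trans hmax.2⟩
    have := t.le_max' _ this
    omega

noncomputable def blockConst (k : ℕ) (a b : ℕ → ℝ) (p q : ℕ) : ℝ :=
  -(∏ i ∈ Icc 1 (k + 1) \ Ioc p q, (b p - a i)) / ∏ j ∈ Icc 1 k \ Icc p q, (b p - b j)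

theorem pow_dvd_charpoly_Zab_sub_iff {k : ℕ} {a b : ℕ → ℝ} {p q : ℕ} (hab : Interlaces k a b)
    (hI : IsMaxConstInterval k b p q) (z : ℕ → ℂ) :
    (X - C (b p : ℂ)) ^ (q + 1 - p) ∣
        (Zab k a b z).charpoly - ∏ i ∈ Icc 1 (k + 1), (X - C (a i : ℂ)) ↔
      ∑ i ∈ Icc p q, Complex.normSq (z i) = blockConst k a b p q := by
  have hT : Icc p q ⊆ Icc 1 k := Icc_subset_Icc hI.1 hI.2.2.1
  have hT' : Ioc p q ⊆ Icc 1 (k + 1) :=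
    Ioc_subset_Icc_self.trans (Icc_subset_Icc hI.1 (by have := hI.2.2.1; omega))
  have hbT : ∀ j ∈ Icc p q, X - C (b j : ℂ) = X - C (b p : ℂ) := fun j hj => by
    rw [hI.2.2.2.1 j (mem_Icc.1 hj).1 (mem_Icc.1 hj).2]
  have haT : ∀ i ∈ Ioc p q, X - C (a i : ℂ) = X - C (b p : ℂ) := fun i hi => by
    rw [hI.left_apply_eq hab (mem_Ioc.1 hi).1 (mem_Ioc.1 hi).2]
  have hcard : #(Icc p q) = q - p + 1 := by rw [Nat.card_Icc]; have := hI.2.1; omega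
  set S := ∑ i ∈ Icc p q, Complex.normSq (z i)
  set Q' := ∏ j ∈ Icc 1 k \ Icc p q, (X - C (b j : ℂ))
  set P' := ∏ i ∈ Icc 1 (k + 1) \ Ioc p q, (X - C (a i : ℂ))
  have hsum := pow_card_dvd_sum_mul_prod_erase_sub hT hbT fun i => C (Complex.normSq (z i) : ℂ)
  rw [hcard, Nat.add_sub_cancel, ← map_sum, ← Complex.ofReal_sum] at hsum
  -- the first two summands are multiples of `(X - b_p) ^ (q - p + 1)`
  have hsplit : (Zab k a b z).charpoly - ∏ i ∈ Icc 1 (k + 1), (X - C (a i : ℂ)) =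
      (X - C (b p : ℂ)) ^ (q - p + 1) * ((X - C (((∑ i ∈ Icc 1 (k + 1), a i) -
        ∑ i ∈ Icc 1 k, b i : ℝ) : ℂ)) * Q') -
      (∑ i ∈ Icc 1 k, C (Complex.normSq (z i) : ℂ) * ∏ j ∈ (Icc 1 k).erase i, (X - C (b j : ℂ)) -
        C (S : ℂ) * (X - C (b p : ℂ)) ^ (q - p) * Q') -
      (X - C (b p : ℂ)) ^ (q - p) * (C (S : ℂ) * Q' + P') := by
    rw [Zab, charpoly_Zarrow, prod_eq_pow_card_mul_prod_sdiff hT hbT,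
      prod_eq_pow_card_mul_prod_sdiff hT' haT, hcard, Nat.card_Ioc]
    ring
  rw [show q + 1 - p = q - p + 1 by have := hI.2.1; omega, hsplit,
    dvd_sub_right (dvd_sub (dvd_mul_right _ _) hsum), X_sub_C_pow_succ_dvd_pow_mul_iff, IsRoot.def]
  simp only [Q', P', eval_add, eval_mul, eval_C, eval_prod, eval_sub, eval_X]
  rw [blockConst, eq_div_iff (hI.prod_sub_ne_zero hab.antitoneOn_right)]
  norm_cast
  constructor <;> intro h <;> linarith

theorem prod_X_sub_C_dvd_of_forall_isMaxConstInterval {k : ℕ} {b : ℕ → ℝ}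
    (hb : AntitoneOn b (Set.Icc 1 k)) {f : ℂ[X]}
    (h : ∀ p q, IsMaxConstInterval k b p q → (X - C (b p : ℂ)) ^ (q + 1 - p) ∣ f) :
    ∏ i ∈ Icc 1 k, (X - C (b i : ℂ)) ∣ f := by
  classical
  rw [prod_comp (fun v : ℝ => X - C (v : ℂ)) b]
  refine prod_dvd_of_coprime
    (fun v _ v' _ hne => (pairwise_coprime_X_sub_C Complex.ofReal_injective hne).pow)
    fun v hv => ?_
  obtain ⟨i, hi, rfl⟩ := mem_image.1 hv
  obtain ⟨p, q, hI, hpi⟩ := exists_isMaxConstInterval hb hi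
  rw [← hpi, hI.filter_eq_Icc hb, Nat.card_Icc]
  exact h p q hI

theorem mem_Atilde_iff {k : ℕ} {a b : ℕ → ℝ} (hab : Interlaces k a b) (z : ℕ → ℂ) :
    z ∈ Atilde k a b ↔ ∀ p q, IsMaxConstInterval k b p q →
      ∑ i ∈ Icc p q, Complex.normSq (z i) = blockConst k a b p q := by
  rw [Atilde, Set.mem_ofPred_eq, ← sub_eq_zero]
  refine ⟨fun h p q hI => (pow_dvd_charpoly_Zab_sub_iff hab hI z).1 (h ▸ dvd_zero _), fun h => ?_⟩
  refine eq_zero_of_dvd_of_degree_lt (prod_X_sub_C_dvd_of_forall_isMaxConstInterval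
    hab.antitoneOn_right fun p q hI => (pow_dvd_charpoly_Zab_sub_iff hab hI z).2 (h p q hI)) ?_
  rw [degree_eq_natDegree (monic_prod_X_sub_C _ _).ne_zero, natDegree_finsetProd_X_sub_C_eq_card,
    Nat.card_Icc, Nat.add_sub_cancel]
  exact degree_charpoly_Zab_sub_lt k a b z

section blockConst

variable {k : ℕ} {a b : ℕ → ℝ} {p q : ℕ}

theorem blockConst_eq_zero (hI : IsMaxConstInterval k b p q) (h : a p = b p ∨ b q = a (q + 1)) :
    blockConst k a b p q = 0 := by
  obtain ⟨hp, hpq, hqk, hc, -, -⟩ := hI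
  rw [blockConst, neg_div, neg_eq_zero, div_eq_zero_iff]
  left
  rcases h with h | h
  · exact prod_eq_zero (i := p) (by simp; omega) (by rw [h, sub_self])
  · exact prod_eq_zero (i := q + 1) (by simp; omega) (by rw [← h, hc q hpq le_rfl, sub_self])

theorem blockConst_pos (hab : Interlaces k a b) (hI : IsMaxConstInterval k b p q)
    (hap : b p < a p) (haq : a (q + 1) < b q) : 0 < blockConst k a b p q := by
  obtain ⟨hp, hpq, hqk, hc, -, -⟩ := id hI
  have hN : Icc 1 (k + 1) \ Ioc p q = Ico 1 p ∪ insert p (Ioc q (k + 1)) := by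
    ext; simp; omega
  have hD : Icc 1 k \ Icc p q = Ico 1 p ∪ Ioc q k := by
    ext; simp; omega
  rw [blockConst, hN, hD, prod_union (disjoint_left.2 fun x hx hx' => by simp at hx hx'; omega),
    prod_union (disjoint_left.2 fun x hx hx' => by simp at hx hx'; omega),
    prod_insert (by simp; omega)]
  have key : -((∏ i ∈ Ico 1 p, (b p - a i)) * ((b p - a p) * ∏ i ∈ Ioc q (k + 1), (b p - a i))) /
      ((∏ j ∈ Ico 1 p, (b p - b j)) * ∏ j ∈ Ioc q k, (b p - b j)) =
      (a p - b p) * (∏ i ∈ Ico 1 p, (b p - a i) / (b p - b i)) *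
        ((∏ i ∈ Ioc q (k + 1), (b p - a i)) / ∏ j ∈ Ioc q k, (b p - b j)) := by
    rw [prod_div_distrib]; ring
  rw [key]
  refine mul_pos (mul_pos (sub_pos.2 hap) (prod_pos fun i hi => ?_))
    (div_pos (prod_pos fun i hi => ?_) (prod_pos fun j hj => ?_))
  · rw [mem_Ico] at hi
    have hbi := hI.apply_lt_of_lt_left hab.antitoneOn_right hi.1 hi.2
    exact div_pos_of_neg_of_neg (by linarith [(hab i hi.1 (by omega)).1]) (by linarith)
  · rw [mem_Ioc] at hi
    have := hab.antitoneOn_left ⟨by omega, by omega⟩ ⟨by omega, hi.2⟩ hi.1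
    linarith [hc q hpq le_rfl]
  · rw [mem_Ioc] at hj
    exact sub_pos.2 (hI.apply_lt_of_right_lt hab.antitoneOn_right hj.1 hj.2)

theorem blockConst_nonneg (hab : Interlaces k a b) (hI : IsMaxConstInterval k b p q) :
    0 ≤ blockConst k a b p q := by
  obtain ⟨hp, hpq, hqk, -, -, -⟩ := id hI
  rcases (hab p hp (by omega)).1.lt_or_eq with hap | hap
  · rcases (hab q (by omega) hqk).2.lt_or_eq with haq | haq
    · exact (blockConst_pos hab hI hap haq).le
    · exact (blockConst_eq_zero hI (Or.inr haq.symm)).ge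
  · exact (blockConst_eq_zero hI (Or.inl hap.symm)).ge

theorem blockCondition_iff (hab : Interlaces k a b) (hI : IsMaxConstInterval k b p q)
    (z : ℕ → ℂ) :
    ((b p < a p ∧ a (q + 1) < b q) ∧
        ∑ i ∈ Icc p q, Complex.normSq (z i) = blockConst k a b p q) ∨
      ((a p = b p ∨ b q = a (q + 1)) ∧ ∀ i, p ≤ i → i ≤ q → z i = 0) ↔
    ∑ i ∈ Icc p q, Complex.normSq (z i) = blockConst k a b p q := by
  obtain ⟨hp, hpq, hqk, hc, -, -⟩ := id hI
  have hzero : (∀ i, p ≤ i → i ≤ q → z i = 0) ↔ ∑ i ∈ Icc p q, Complex.normSq (z i) = 0 := by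
    simp [sum_eq_zero_iff_of_nonneg fun i _ => Complex.normSq_nonneg (z i)]
  by_cases hnd : b p < a p ∧ a (q + 1) < b q
  · have hdeg : ¬(a p = b p ∨ b q = a (q + 1)) := by
      rintro (h | h) <;> linarith [hc q hpq le_rfl]
    simp [hnd, hdeg]
  · have hdeg : a p = b p ∨ b q = a (q + 1) := by
      by_contra! h
      exact hnd ⟨(hab p hp (by omega)).1.lt_of_ne' h.1, (hab q (by omega) hqk).2.lt_of_ne h.2.symm⟩
    rw [blockConst_eq_zero hI hdeg, ← hzero]
    simp [hnd, hdeg]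

end blockConst

/-- Each maximal constant interval `[p, q]` is determined by `p`, so the whole mass `c p q` can be
put on the coordinate `p`. -/
theorem exists_sum_normSq_eq {k : ℕ} {b : ℕ → ℝ} (c : ℕ → ℕ → ℝ)
    (hc : ∀ p q, IsMaxConstInterval k b p q → 0 ≤ c p q) :
    ∃ z : ℕ → ℂ, ∀ p q, IsMaxConstInterval k b p q →
      ∑ i ∈ Icc p q, Complex.normSq (z i) = c p q := by
  classical
  refine ⟨fun i => if h : ∃ q, IsMaxConstInterval k b i q then (√(c i h.choose) : ℂ) else 0,
    fun p q hI => ?_⟩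
  have hp : ∃ q, IsMaxConstInterval k b p q := ⟨q, hI⟩
  beta_reduce
  rw [sum_eq_single_of_mem p (left_mem_Icc.2 hI.2.1), dif_pos hp, Complex.normSq_ofReal,
    Real.mul_self_sqrt (hc _ _ hp.choose_spec), ← hI.unique_right hp.choose_spec]
  intro i hi hip
  rw [mem_Icc] at hi
  rw [dif_neg fun ⟨q', hI'⟩ => hI.not_isMaxConstInterval_of_lt (by omega) hi.2 hI', map_zero]

theorem statement10_general (k : ℕ) (a b : ℕ → ℝ)
    (hab : ∀ i, 1 ≤ i → i ≤ k → b i ≤ a i ∧ a (i + 1) ≤ b i) :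
    ∃ C : ℕ → ℕ → ℝ,
      ((∀ p q, IsMaxConstInterval k b p q → b p < a p → a (q + 1) < b q → 0 < C p q) ∧
        (∀ z : ℕ → ℂ, z ∈ Atilde k a b ↔
          (∀ p q, IsMaxConstInterval k b p q →
            ((b p < a p ∧ a (q + 1) < b q) ∧
              (∑ i ∈ Finset.Icc p q, Complex.normSq (z i)) = C p q) ∨
            ((a p = b p ∨ b q = a (q + 1)) ∧ ∀ i, p ≤ i → i ≤ q → z i = 0)))) ∧
      ∀ C' : ℕ → ℕ → ℝ,
        ((∀ p q, IsMaxConstInterval k b p q → b p < a p → a (q + 1) < b q → 0 < C' p q) ∧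
          (∀ z : ℕ → ℂ, z ∈ Atilde k a b ↔
            (∀ p q, IsMaxConstInterval k b p q →
              ((b p < a p ∧ a (q + 1) < b q) ∧
                (∑ i ∈ Finset.Icc p q, Complex.normSq (z i)) = C' p q) ∨
              ((a p = b p ∨ b q = a (q + 1)) ∧ ∀ i, p ≤ i → i ≤ q → z i = 0)))) →
        ∀ p q, IsMaxConstInterval k b p q → b p < a p → a (q + 1) < b q →
          C' p q = C p q := by
  refine ⟨blockConst k a b, ⟨fun p q hI => blockConst_pos hab hI, fun z =>
    (mem_Atilde_iff hab z).trans (forall₃_congr fun p q hI => (blockCondition_iff hab hI z).symm)⟩,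
    ?_⟩
  rintro C' ⟨-, hC'⟩ p q hI hap haq
  obtain ⟨z, hz⟩ := exists_sum_normSq_eq _ fun p q hI => blockConst_nonneg hab hI
  rcases (hC' z).1 ((mem_Atilde_iff hab z).2 hz) p q hI with ⟨-, h⟩ | ⟨h | h, -⟩
  · rw [← h, hz p q hI]
  · exact absurd h hap.ne'
  · exact absurd h haq.ne'

/-- There exist unique positive constants `C p q`, one for each maximal
constant interval `[p, q]` of `b` with `a_p > b_p` and `b_q > a_{q+1}`, such that
`z ∈ Ã_{k+1}(a,b)` iff for every maximal constant interval `[p, q]` of `b`, either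
`a_p > b_p` and `b_q > a_{q+1}` and `Σ_{i=p}^{q} |z_i|² = C p q`, or else
(`a_p = b_p` or `b_q = a_{q+1}`) and `z_i = 0` for all `p ≤ i ≤ q`. -/
theorem statement10 (k : ℕ) (hk : 1 ≤ k) (a b : ℕ → ℝ)
    (hab : ∀ i, 1 ≤ i → i ≤ k → b i ≤ a i ∧ a (i + 1) ≤ b i) :
    ∃ C : ℕ → ℕ → ℝ,
      ((∀ p q, IsMaxConstInterval k b p q → b p < a p → a (q + 1) < b q → 0 < C p q) ∧
        (∀ z : ℕ → ℂ, z ∈ Atilde k a b ↔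
          (∀ p q, IsMaxConstInterval k b p q →
            ((b p < a p ∧ a (q + 1) < b q) ∧
              (∑ i ∈ Finset.Icc p q, Complex.normSq (z i)) = C p q) ∨
            ((a p = b p ∨ b q = a (q + 1)) ∧ ∀ i, p ≤ i → i ≤ q → z i = 0)))) ∧
      ∀ C' : ℕ → ℕ → ℝ,
        ((∀ p q, IsMaxConstInterval k b p q → b p < a p → a (q + 1) < b q → 0 < C' p q) ∧
          (∀ z : ℕ → ℂ, z ∈ Atilde k a b ↔
            (∀ p q, IsMaxConstInterval k b p q →
              ((b p < a p ∧ a (q + 1) < b q) ∧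
                (∑ i ∈ Finset.Icc p q, Complex.normSq (z i)) = C' p q) ∨
              ((a p = b p ∨ b q = a (q + 1)) ∧ ∀ i, p ≤ i → i ≤ q → z i = 0)))) →
        ∀ p q, IsMaxConstInterval k b p q → b p < a p → a (q + 1) < b q →
          C' p q = C p q :=
  statement10_general k a b hab
end

section
/- Let k ≥ 1 and let a₁ ≥ b₁ ≥ a₂ ≥ ⋯ ≥ a_k ≥ b_k ≥ a_{k+1} be real numbers. For any z, z′ ∈ Ã_{k+1}(a, b) there exists a unitary k×k matrix g ∈ U(k) such that g · diag(b₁, …, b_k) · g* = diag(b₁, …, b_k) and ι(g) · Z_{(a,b)}(z) · ι(g)* = Z_{(a,b)}(z′), where ι(g) is the (k+1)×(k+1) block-diagonal matrix with blocks g and 1. That is, the stabilizer of diag(b₁, …, b_k) in U(k) acts transitively on Ã_{k+1}(a, b). -/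
open Polynomial

open Matrix

/-- `ι(g)`: the `(k+1) × (k+1)` block-diagonal matrix with upper-left `k × k` block `g`
and lower-right entry `1`. -/
def unitaryEmbed (k : ℕ) (g : Matrix (Fin k) (Fin k) ℂ) :
    Matrix (Fin (k + 1)) (Fin (k + 1)) ℂ :=
  Matrix.of fun i j =>
    if hi : (i : ℕ) < k then
      (if hj : (j : ℕ) < k then g ⟨i, hi⟩ ⟨j, hj⟩ else 0)
    else
      (if (j : ℕ) < k then 0 else 1)


section AuxLemmas

lemma Zarrow_eq (k : ℕ) (b : ℕ → ℝ) (w : ℝ) (z : ℕ → ℂ) :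
    Zarrow k b w z = Matrix.reindex finSumFinEquiv finSumFinEquiv
      (Matrix.fromBlocks (Matrix.diagonal fun i : Fin k => (b ((i : ℕ) + 1) : ℂ))
        (Matrix.of fun (i : Fin k) (_ : Fin 1) => (starRingEnd ℂ) (z ((i : ℕ) + 1)))
        (Matrix.of fun (_ : Fin 1) (j : Fin k) => z ((j : ℕ) + 1))
        (Matrix.of fun (_ _ : Fin 1) => (w : ℂ))) := by
  have h : ∀ M : Matrix (Fin k ⊕ Fin 1) (Fin k ⊕ Fin 1) ℂ,
      (Zarrow k b w z).submatrix finSumFinEquiv finSumFinEquiv = M →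
      Zarrow k b w z = Matrix.reindex finSumFinEquiv finSumFinEquiv M := by
    intro M hM
    rw [← hM, reindex_apply, submatrix_submatrix]
    simp
  apply h
  ext i j
  cases i with
  | inl i =>
    cases j with
    | inl j =>
      simp [Zarrow, Matrix.diagonal, Fin.ext_iff]
    | inr j =>
      simp [Zarrow, finSumFinEquiv]
  | inr i =>
    cases j with
    | inl j => simp [Zarrow, finSumFinEquiv]
    | inr j => simp [Zarrow, finSumFinEquiv]

lemma unitaryEmbed_eq (k : ℕ) (g : Matrix (Fin k) (Fin k) ℂ) :
    unitaryEmbed k g = Matrix.reindex finSumFinEquiv finSumFinEquiv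
      (Matrix.fromBlocks g 0 0 1) := by
  have h : ∀ M : Matrix (Fin k ⊕ Fin 1) (Fin k ⊕ Fin 1) ℂ,
      (unitaryEmbed k g).submatrix finSumFinEquiv finSumFinEquiv = M →
      unitaryEmbed k g = Matrix.reindex finSumFinEquiv finSumFinEquiv M := by
    intro M hM
    rw [← hM, reindex_apply, submatrix_submatrix]
    simp
  apply h
  ext i j
  cases i with
  | inl i =>
    cases j with
    | inl j => simp [unitaryEmbed]
    | inr j => simp [unitaryEmbed, finSumFinEquiv]
  | inr i =>
    cases j with
    | inl j => simp [unitaryEmbed, finSumFinEquiv]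
    | inr j => simp [unitaryEmbed, finSumFinEquiv, Matrix.one_apply, Subsingleton.elim i j]

lemma charpoly_fromBlocks_arrow (k : ℕ) (d : Fin k → ℝ) (w : ℝ) (c : Fin k → ℂ) :
    (Matrix.fromBlocks (Matrix.diagonal fun i : Fin k => (d i : ℂ))
        (Matrix.of fun (i : Fin k) (_ : Fin 1) => (starRingEnd ℂ) (c i))
        (Matrix.of fun (_ : Fin 1) (j : Fin k) => c j)
        (Matrix.of fun (_ _ : Fin 1) => (w : ℂ))).charpoly =
      (X - C (w : ℂ)) * ∏ i : Fin k, (X - C (d i : ℂ))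
        - ∑ i : Fin k, C (c i * (starRingEnd ℂ) (c i)) *
            ∏ j ∈ Finset.univ.erase i, (X - C (d j : ℂ)) := by
  apply Polynomial.eq_of_infinite_eval_eq
  have hfin : (Set.range (fun i : Fin k => (d i : ℂ))).Finite := Set.finite_range _
  apply Set.Infinite.mono (s := (Set.range (fun i : Fin k => (d i : ℂ)))ᶜ)
  swap
  · exact Set.Finite.infinite_compl hfin
  intro x hx
  simp only [Set.mem_compl_iff, Set.mem_range, not_exists] at hx
  have hx' : ∀ i : Fin k, x - (d i : ℂ) ≠ 0 := fun i => sub_ne_zero.mpr fun h => hx i h.symm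
  simp only [Set.mem_setOf_eq]
  set A := Matrix.fromBlocks (Matrix.diagonal fun i : Fin k => (d i : ℂ))
        (Matrix.of fun (i : Fin k) (_ : Fin 1) => (starRingEnd ℂ) (c i))
        (Matrix.of fun (_ : Fin 1) (j : Fin k) => c j)
        (Matrix.of fun (_ _ : Fin 1) => (w : ℂ)) with hA
  have hdet : eval x A.charpoly = ((charmatrix A).map (evalRingHom x)).det := by
    rw [Matrix.charpoly]
    simpa [RingHom.mapMatrix_apply] using RingHom.map_det (evalRingHom x) A.charmatrix
  rw [hdet]
  have hmap : ((charmatrix A).map (evalRingHom x))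
      = Matrix.fromBlocks (Matrix.diagonal fun i : Fin k => x - (d i : ℂ))
        (Matrix.of fun (i : Fin k) (_ : Fin 1) => -((starRingEnd ℂ) (c i)))
        (Matrix.of fun (_ : Fin 1) (j : Fin k) => -(c j))
        (Matrix.of fun (_ _ : Fin 1) => x - (w : ℂ)) := by
    rw [charmatrix_fromBlocks]
    ext i j
    cases i with
    | inl i =>
      cases j with
      | inl j =>
        by_cases h : i = j <;>
          simp [charmatrix_apply, Matrix.diagonal_apply, h, Matrix.map_apply]
      | inr j => simp [Matrix.map_apply]
    | inr i =>
      cases j with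
      | inl j => simp [Matrix.map_apply]
      | inr j =>
        have : i = j := Subsingleton.elim i j
        simp [charmatrix_apply, this, Matrix.map_apply, Matrix.one_apply]
  rw [hmap]
  -- invertibility of the diagonal block
  have hdet' : IsUnit (Matrix.diagonal fun i : Fin k => x - (d i : ℂ)).det := by
    rw [Matrix.det_diagonal]
    exact IsUnit.mk0 _ (Finset.prod_ne_zero_iff.mpr fun i _ => hx' i)
  letI : Invertible (Matrix.diagonal fun i : Fin k => x - (d i : ℂ)) :=
    Matrix.invertibleOfIsUnitDet _ hdet'
  rw [Matrix.det_fromBlocks₁₁]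
  have hinv : (⅟ (Matrix.diagonal fun i : Fin k => x - (d i : ℂ)))
      = Matrix.diagonal fun i : Fin k => (x - (d i : ℂ))⁻¹ := by
    apply invOf_eq_right_inv
    rw [Matrix.diagonal_mul_diagonal]
    convert Matrix.diagonal_one
    exact mul_inv_cancel₀ (hx' _)
  rw [hinv]
  rw [Matrix.det_diagonal, Matrix.det_unique]
  -- now pure computation
  have hentry : (Matrix.of (fun (_ _ : Fin 1) => x - (w : ℂ)) -
      Matrix.of (fun (_ : Fin 1) (j : Fin k) => -(c j)) *
        Matrix.diagonal (fun i : Fin k => (x - (d i : ℂ))⁻¹) *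
        Matrix.of fun (i : Fin k) (_ : Fin 1) => -((starRingEnd ℂ) (c i)))
        default default
      = (x - (w:ℂ)) - ∑ i : Fin k, c i * (starRingEnd ℂ) (c i) * (x - (d i : ℂ))⁻¹ := by
    simp [Matrix.mul_apply, Matrix.sub_apply, Matrix.diagonal_apply, Finset.mul_sum,
      Finset.sum_ite_eq, mul_comm, mul_assoc, mul_left_comm]
  rw [hentry]
  -- RHS evaluation
  rw [eval_sub, eval_mul, eval_sub, eval_X, eval_C, eval_prod, eval_finset_sum]
  simp only [eval_mul, eval_sub, eval_X, eval_C, eval_prod]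
  rw [mul_sub, Finset.mul_sum]
  congr 1
  · ring
  · apply Finset.sum_congr rfl
    intro i _
    have : (∏ j : Fin k, (x - (d j : ℂ))) = (x - (d i:ℂ)) * ∏ j ∈ Finset.univ.erase i, (x - (d j : ℂ)) :=
      (Finset.mul_prod_erase _ _ (Finset.mem_univ i)).symm
    rw [this]
    have hne := hx' i
    field_simp

lemma keylin {k : ℕ} (β : Fin k → ℝ) (c : Fin k → ℂ)
    (h : ∑ i : Fin k, C (c i) * ∏ j ∈ Finset.univ.erase i, (X - C ((β j : ℝ) : ℂ)) = 0)
    (t : ℝ) :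
    ∑ i ∈ Finset.univ.filter (fun i => β i = t), c i = 0 := by
  classical
  set S := Finset.univ.filter (fun i : Fin k => β i = t) with hS
  by_cases hSe : S = ∅
  · rw [hSe]; simp
  have hm : 1 ≤ S.card := Finset.card_pos.mpr (Finset.nonempty_of_ne_empty hSe)
  set m := S.card with hmdef
  set T := Finset.univ.filter (fun i : Fin k => ¬ β i = t) with hT
  set Q : ℂ[X] := ∏ j ∈ T, (X - C ((β j : ℝ) : ℂ)) with hQ
  -- products over erase for i ∈ S
  have hprodS : ∀ i ∈ S, ∏ j ∈ Finset.univ.erase i, (X - C ((β j : ℝ) : ℂ))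
      = (X - C (t : ℂ)) ^ (m - 1) * Q := by
    intro i hi
    have hiS : β i = t := (Finset.mem_filter.mp hi).2
    have hsplit : Finset.univ.erase i = (S.erase i) ∪ T := by
      ext x
      simp only [Finset.mem_erase, Finset.mem_union, Finset.mem_filter, Finset.mem_univ,
        true_and, hS, hT]
      constructor
      · rintro ⟨hx, -⟩
        by_cases hb : β x = t
        · exact Or.inl ⟨hx, hb⟩
        · exact Or.inr hb
      · rintro (⟨hx, -⟩ | hb)
        · exact ⟨hx, trivial⟩
        · refine ⟨fun hxi => hb ?_, trivial⟩
          rw [hxi, hiS]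
    have hdisj : Disjoint (S.erase i) T := by
      rw [Finset.disjoint_left]
      intro x hx hxT
      exact (Finset.mem_filter.mp hxT).2 (Finset.mem_filter.mp (Finset.mem_of_mem_erase hx)).2
    rw [hsplit, Finset.prod_union hdisj]
    congr 1
    have : ∀ j ∈ S.erase i, (X - C ((β j : ℝ) : ℂ)) = X - C ((t : ℝ) : ℂ) := by
      intro j hj
      have := (Finset.mem_filter.mp (Finset.mem_of_mem_erase hj)).2
      rw [this]
    rw [Finset.prod_congr rfl this, Finset.prod_const, Finset.card_erase_of_mem hi]
  have hprodT : ∀ i ∈ T, ∏ j ∈ Finset.univ.erase i, (X - C ((β j : ℝ) : ℂ))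
      = (X - C (t : ℂ)) ^ m * ∏ j ∈ T.erase i, (X - C ((β j : ℝ) : ℂ)) := by
    intro i hi
    have hiT : ¬ β i = t := (Finset.mem_filter.mp hi).2
    have hsplit : Finset.univ.erase i = S ∪ (T.erase i) := by
      ext x
      simp only [Finset.mem_erase, Finset.mem_union, Finset.mem_filter, Finset.mem_univ,
        true_and, hS, hT]
      constructor
      · rintro ⟨hx, -⟩
        by_cases hb : β x = t
        · exact Or.inl hb
        · exact Or.inr ⟨hx, hb⟩
      · rintro (hb | ⟨hx, -⟩)
        · refine ⟨fun hxi => hiT ?_, trivial⟩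
          rw [← hxi, hb]
        · exact ⟨hx, trivial⟩
    have hdisj : Disjoint S (T.erase i) := by
      rw [Finset.disjoint_left]
      intro x hx hxT
      exact (Finset.mem_filter.mp (Finset.mem_of_mem_erase hxT)).2 (Finset.mem_filter.mp hx).2
    rw [hsplit, Finset.prod_union hdisj]
    congr 1
    have : ∀ j ∈ S, (X - C ((β j : ℝ) : ℂ)) = X - C ((t : ℝ) : ℂ) := by
      intro j hj
      have := (Finset.mem_filter.mp hj).2
      rw [this]
    rw [Finset.prod_congr rfl this, Finset.prod_const]
  -- split the sum
  set R : ℂ[X] := ∑ i ∈ T, C (c i) * ∏ j ∈ T.erase i, (X - C ((β j : ℝ) : ℂ)) with hR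
  have h1 : ∑ i ∈ S, C (c i) * ∏ j ∈ Finset.univ.erase i, (X - C ((β j : ℝ) : ℂ))
      = C (∑ i ∈ S, c i) * ((X - C (t:ℂ)) ^ (m - 1) * Q) := by
    rw [map_sum, Finset.sum_mul]
    exact Finset.sum_congr rfl fun i hi => by rw [hprodS i hi]
  have h2 : ∑ i ∈ T, C (c i) * ∏ j ∈ Finset.univ.erase i, (X - C ((β j : ℝ) : ℂ))
      = (X - C (t:ℂ)) ^ m * R := by
    rw [hR, Finset.mul_sum]
    exact Finset.sum_congr rfl fun i hi => by rw [hprodT i hi]; ring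
  have hsplit' : (0:ℂ[X]) = C (∑ i ∈ S, c i) * ((X - C (t:ℂ)) ^ (m - 1) * Q)
      + (X - C (t:ℂ)) ^ m * R := by
    rw [← h1, ← h2, ← h,
      ← Finset.sum_filter_add_sum_filter_not Finset.univ (fun i : Fin k => β i = t)]
  have hpow : (X - C (t:ℂ)) ^ m = (X - C (t:ℂ)) ^ (m - 1) * (X - C (t:ℂ)) := by
    rw [← pow_succ, Nat.sub_add_cancel hm]
  have hfac : (X - C (t:ℂ)) ^ (m - 1) * (C (∑ i ∈ S, c i) * Q + (X - C (t:ℂ)) * R)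
      = (X - C (t:ℂ)) ^ (m - 1) * 0 := by
    rw [mul_zero, hsplit', hpow]
    ring
  have hE : C (∑ i ∈ S, c i) * Q + (X - C (t:ℂ)) * R = 0 :=
    mul_left_cancel₀ (pow_ne_zero _ (X_sub_C_ne_zero _)) hfac
  have heval := congrArg (eval (t:ℂ)) hE
  simp only [eval_add, eval_mul, eval_sub, eval_X, eval_C, eval_zero, sub_self, zero_mul,
    add_zero] at heval
  have hQt : eval (t:ℂ) Q ≠ 0 := by
    rw [hQ, eval_prod]
    apply Finset.prod_ne_zero_iff.mpr
    intro j hj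
    simp only [eval_sub, eval_X, eval_C]
    have : ¬ β j = t := (Finset.mem_filter.mp hj).2
    intro hc
    apply this
    have : ((β j : ℝ) : ℂ) = (t:ℂ) := by linear_combination -hc
    exact_mod_cast this
  exact (mul_eq_zero.mp heval).resolve_right hQt

local notation "⟪" x ", " y "⟫" => inner (𝕜 := ℂ) x y

lemma exists_unitary_mulVec {n : Type*} [Fintype n] [DecidableEq n] (u v : n → ℂ)
    (h : ∑ i, Complex.normSq (u i) = ∑ i, Complex.normSq (v i)) :
    ∃ U ∈ Matrix.unitaryGroup n ℂ, U.mulVec u = v := by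
  classical
  by_cases hu : u = 0
  · refine ⟨1, Submonoid.one_mem _, ?_⟩
    have hv : v = 0 := by
      funext i
      have h0 : ∑ i, Complex.normSq (v i) = 0 := by rw [← h, hu]; simp
      have := (Finset.sum_eq_zero_iff_of_nonneg
        (fun i _ => Complex.normSq_nonneg (v i))).mp h0 i (Finset.mem_univ i)
      exact Complex.normSq_eq_zero.mp this
    rw [hu, hv, Matrix.one_mulVec]
  · -- u ≠ 0
    have hne : Nonempty n := by
      by_contra hn
      exact hu (funext fun i => absurd ⟨i⟩ hn)
    obtain ⟨i₀⟩ := hne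
    set r : ℝ := Real.sqrt (∑ i, Complex.normSq (u i)) with hr
    have hsum_pos : 0 < ∑ i, Complex.normSq (u i) := by
      obtain ⟨i, hi⟩ : ∃ i, u i ≠ 0 := by
        by_contra hc
        push_neg at hc
        exact hu (funext hc)
      exact Finset.sum_pos' (fun i _ => Complex.normSq_nonneg (u i))
        ⟨i, Finset.mem_univ i, Complex.normSq_pos.mpr hi⟩
    have hrpos : 0 < r := Real.sqrt_pos.mpr hsum_pos
    have hr2 : (r : ℝ) ^ 2 = ∑ i, Complex.normSq (u i) := Real.sq_sqrt hsum_pos.le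
    have hr2' : (r : ℝ) ^ 2 = ∑ i, Complex.normSq (v i) := hr2.trans h
    set u₀ : EuclideanSpace ℂ n := ((r : ℂ))⁻¹ • (WithLp.toLp 2 u : EuclideanSpace ℂ n) with hu₀
    set v₀ : EuclideanSpace ℂ n := ((r : ℂ))⁻¹ • (WithLp.toLp 2 v : EuclideanSpace ℂ n) with hv₀
    have hrC : (r : ℂ) ≠ 0 := by exact_mod_cast hrpos.ne'
    have hu₀j : ∀ j, u₀ j = ((r : ℂ))⁻¹ * u j := fun j => rfl
    have hv₀j : ∀ j, v₀ j = ((r : ℂ))⁻¹ * v j := fun j => rfl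
    have hnorm : ∀ (w : EuclideanSpace ℂ n), (r:ℝ)^2 = ∑ i, Complex.normSq (w i) →
        ⟪((r : ℂ))⁻¹ • w, ((r : ℂ))⁻¹ • w⟫ = 1 := by
      intro w hw
      rw [PiLp.inner_apply]
      have hsm : ∀ j, (((r : ℂ))⁻¹ • w) j = ((r : ℂ))⁻¹ * w j := fun j => rfl
      simp only [hsm]
      have : ∀ j, (starRingEnd ℂ) (((r : ℂ))⁻¹ * w j) * (((r : ℂ))⁻¹ * w j)
          = ((r:ℂ)^2)⁻¹ * Complex.normSq (w j) := by
        intro j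
        rw [Complex.normSq_eq_conj_mul_self, _root_.map_mul, map_inv₀, Complex.conj_ofReal]
        ring
      simp only [RCLike.inner_apply] at *
      rw [Finset.sum_congr rfl fun j _ => (mul_comm _ _).trans (this j), ← Finset.mul_sum]
      rw [inv_mul_eq_one₀ (pow_ne_zero 2 hrC)]
      push_cast
      exact_mod_cast hw
    -- orthonormal singleton families
    have hON : ∀ (w : EuclideanSpace ℂ n), ⟪w, w⟫ = 1 →
        Orthonormal ℂ (Set.restrict {i₀} (fun _ : n => w)) := by
      intro w hw
      rw [orthonormal_iff_ite]
      intro i j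
      rw [Subsingleton.elim i j]
      rw [if_pos rfl]; exact hw
    have card_eq : Module.finrank ℂ (EuclideanSpace ℂ n) = Fintype.card n :=
      finrank_euclideanSpace
    obtain ⟨b, hb⟩ := (hON u₀ (hnorm (WithLp.toLp 2 u) hr2)).exists_orthonormalBasis_extension_of_card_eq card_eq
    obtain ⟨b', hb'⟩ := (hON v₀ (hnorm (WithLp.toLp 2 v) hr2')).exists_orthonormalBasis_extension_of_card_eq card_eq
    have hbi₀ : b i₀ = u₀ := hb i₀ rfl
    have hbi₀' : b' i₀ = v₀ := hb' i₀ rfl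
    set F : Matrix n n ℂ := Matrix.of (fun i j => b i j) with hF
    set G : Matrix n n ℂ := Matrix.of (fun i j => b' i j) with hG
    have hinner : ∀ (c : OrthonormalBasis n ℂ (EuclideanSpace ℂ n)) (i j : n),
        (∑ m, (starRingEnd ℂ) (c i m) * c j m) = if i = j then 1 else 0 := by
      intro c i j
      have := orthonormal_iff_ite.mp c.orthonormal i j
      rw [PiLp.inner_apply] at this
      simpa [RCLike.inner_apply, mul_comm] using this
    have hFmem : F ∈ Matrix.unitaryGroup n ℂ := by
      rw [Matrix.mem_unitaryGroup_iff]
      ext i j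
      rw [Matrix.mul_apply, Matrix.one_apply]
      have := hinner b j i
      calc ∑ m, F i m * (star F) m j = ∑ m, (starRingEnd ℂ) (F j m) * F i m := by
            apply Finset.sum_congr rfl
            intro m _
            simp [Matrix.star_apply, mul_comm]
          _ = if j = i then 1 else 0 := hinner b j i
          _ = if i = j then 1 else 0 := by simp [eq_comm]
    have hGmem : G ∈ Matrix.unitaryGroup n ℂ := by
      rw [Matrix.mem_unitaryGroup_iff]
      ext i j
      rw [Matrix.mul_apply, Matrix.one_apply]
      calc ∑ m, G i m * (star G) m j = ∑ m, (starRingEnd ℂ) (G j m) * G i m := by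
            apply Finset.sum_congr rfl
            intro m _
            simp [Matrix.star_apply, mul_comm]
          _ = if j = i then 1 else 0 := hinner b' j i
          _ = if i = j then 1 else 0 := by simp [eq_comm]
    set M : Matrix n n ℂ := star F * G with hM
    have hMmem : M ∈ Matrix.unitaryGroup n ℂ :=
      mul_mem (Unitary.star_mem hFmem) hGmem
    refine ⟨Mᵀ, ?_, ?_⟩
    · rw [Matrix.mem_unitaryGroup_iff]
      have hstar : star (Mᵀ) = (star M)ᵀ := by
        ext i j
        simp [Matrix.star_apply, Matrix.transpose_apply]
      rw [hstar, ← Matrix.transpose_mul, Matrix.mem_unitaryGroup_iff'.mp hMmem,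
        Matrix.transpose_one]
    · funext i
      have hUij : ∀ j, Mᵀ i j = ∑ m, (starRingEnd ℂ) (F m j) * G m i := by
        intro j
        rw [Matrix.transpose_apply, hM, Matrix.mul_apply]
        apply Finset.sum_congr rfl
        intro m _
        simp [Matrix.star_apply]
      have hu' : ∀ j, u j = (r : ℂ) * F i₀ j := by
        intro j
        have : F i₀ j = u₀ j := by rw [hF, Matrix.of_apply, hbi₀]
        rw [this, hu₀j]
        field_simp
      rw [Matrix.mulVec]
      show ∑ j, Mᵀ i j * u j = v i
      calc ∑ j, Mᵀ i j * u j
          = ∑ j, ∑ m, (starRingEnd ℂ) (F m j) * G m i * ((r:ℂ) * F i₀ j) := by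
            apply Finset.sum_congr rfl
            intro j _
            rw [hUij j, hu' j, Finset.sum_mul]
        _ = (r:ℂ) * ∑ m, G m i * ∑ j, (starRingEnd ℂ) (F m j) * F i₀ j := by
            rw [Finset.sum_comm, Finset.mul_sum]
            apply Finset.sum_congr rfl
            intro m _
            rw [Finset.mul_sum, Finset.mul_sum]
            apply Finset.sum_congr rfl
            intro j _
            ring
        _ = (r:ℂ) * ∑ m, G m i * (if m = i₀ then 1 else 0) := by
            rw [Finset.mul_sum, Finset.mul_sum]
            apply Finset.sum_congr rfl
            intro m _
            exact congrArg (fun x => (r:ℂ) * (G m i * x)) (hinner b m i₀)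
        _ = (r:ℂ) * G i₀ i := by simp
        _ = v i := by
            have : G i₀ i = v₀ i := by rw [hG, Matrix.of_apply, hbi₀']
            rw [this, hv₀j]
            field_simp

lemma exists_block_unitary {k : ℕ} (β : Fin k → ℝ) (c c' : Fin k → ℂ)
    (hnorm : ∀ t : ℝ, ∑ i ∈ Finset.univ.filter (fun i => β i = t), Complex.normSq (c i)
      = ∑ i ∈ Finset.univ.filter (fun i => β i = t), Complex.normSq (c' i)) :
    ∃ g ∈ Matrix.unitaryGroup (Fin k) ℂ,
      (g * Matrix.diagonal (fun i => ((β i : ℝ) : ℂ)) =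
        Matrix.diagonal (fun i => ((β i : ℝ) : ℂ)) * g) ∧ g.mulVec c = c' := by
  classical
  have hex : ∀ t : ℝ, ∃ U : Matrix {i : Fin k // β i = t} {i : Fin k // β i = t} ℂ,
      U ∈ Matrix.unitaryGroup {i : Fin k // β i = t} ℂ ∧
        U.mulVec (fun i => c i.1) = (fun i => c' i.1) := by
    intro t
    have hsum : ∑ i : {i : Fin k // β i = t}, Complex.normSq (c i.1)
        = ∑ i : {i : Fin k // β i = t}, Complex.normSq (c' i.1) := by
      rw [← Finset.sum_subtype (Finset.univ.filter (fun i : Fin k => β i = t))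
          (by simp) (fun i => Complex.normSq (c i)),
        ← Finset.sum_subtype (Finset.univ.filter (fun i : Fin k => β i = t))
          (by simp) (fun i => Complex.normSq (c' i))]
      exact hnorm t
    obtain ⟨U, hU1, hU2⟩ := exists_unitary_mulVec _ _ hsum
    exact ⟨U, hU1, hU2⟩
  choose U hU1 hU2 using hex
  set g : Matrix (Fin k) (Fin k) ℂ :=
    Matrix.of (fun i j => if h : β j = β i then U (β i) ⟨i, rfl⟩ ⟨j, h⟩ else 0) with hg
  have hg_eq : ∀ (t : ℝ) (i j : Fin k) (hi : β i = t) (hj : β j = t),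
      g i j = U t ⟨i, hi⟩ ⟨j, hj⟩ := by
    intro t i j hi hj
    subst hi
    simp only [hg, Matrix.of_apply, dif_pos hj]
  have hg_ne : ∀ (i j : Fin k), ¬ β j = β i → g i j = 0 := by
    intro i j hij
    simp only [hg, Matrix.of_apply, dif_neg hij]
  have hsum_subtype : ∀ (t : ℝ) (f : Fin k → ℂ), (∀ m, ¬ β m = t → f m = 0) →
      ∑ m, f m = ∑ m : {m : Fin k // β m = t}, f m.1 := by
    intro t f hf
    rw [← Finset.sum_subtype (Finset.univ.filter (fun m : Fin k => β m = t))
        (by simp) f]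
    rw [← Finset.sum_filter_add_sum_filter_not Finset.univ (fun m : Fin k => β m = t)]
    rw [Finset.sum_eq_zero (fun m hm => hf m (Finset.mem_filter.mp hm).2), add_zero]
  have hgmem : g ∈ Matrix.unitaryGroup (Fin k) ℂ := by
    rw [Matrix.mem_unitaryGroup_iff]
    ext i j
    rw [Matrix.mul_apply, Matrix.one_apply]
    by_cases hij : β j = β i
    · set t := β i with ht
      have hsum := hsum_subtype t (fun m => g i m * (star g) m j) ?_
      · rw [hsum]
        have : ∀ m : {m : Fin k // β m = t}, g i m.1 * (star g) m.1 j
            = U t ⟨i, rfl⟩ m * (star (U t)) m ⟨j, hij⟩ := by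
          intro m
          rw [Matrix.star_apply, Matrix.star_apply,
            hg_eq t i m.1 rfl m.2, hg_eq t j m.1 hij m.2]
        rw [Finset.sum_congr rfl (fun m _ => this m), ← Matrix.mul_apply,
          Matrix.mem_unitaryGroup_iff.mp (hU1 t), Matrix.one_apply]
        simp [Subtype.ext_iff]
      · intro m hm
        show g i m * (star g) m j = 0
        rw [hg_ne i m (fun hc => hm (hc.trans rfl)), zero_mul]
    · have : ∀ m, g i m * (star g) m j = 0 := by
        intro m
        by_cases hm : β m = β i
        · rw [Matrix.star_apply, hg_ne j m (fun hc => hij (hc.symm.trans hm)), star_zero, mul_zero]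
        · rw [hg_ne i m hm, zero_mul]
      rw [Finset.sum_eq_zero (fun m _ => this m), if_neg (fun hc : i = j => hij (by rw [hc]))]
  have hcomm : g * Matrix.diagonal (fun i => ((β i : ℝ) : ℂ)) =
      Matrix.diagonal (fun i => ((β i : ℝ) : ℂ)) * g := by
    ext i j
    rw [Matrix.mul_apply, Matrix.mul_apply]
    rw [Finset.sum_eq_single j (fun m _ hm => by
        rw [Matrix.diagonal_apply_ne _ hm, mul_zero]) (by simp),
      Finset.sum_eq_single i (fun m _ hm => by
        rw [Matrix.diagonal_apply_ne' _ hm, zero_mul]) (by simp)]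
    rw [Matrix.diagonal_apply_eq, Matrix.diagonal_apply_eq]
    by_cases hij : β j = β i
    · rw [hij]; ring
    · rw [hg_ne i j hij, mul_zero, zero_mul]
  have hmv : g.mulVec c = c' := by
    funext i
    rw [Matrix.mulVec]
    show ∑ m, g i m * c m = c' i
    set t := β i with ht
    rw [hsum_subtype t (fun m => g i m * c m)
      (fun m hm => by
        show g i m * c m = 0
        rw [hg_ne i m (fun hc => hm (hc.trans rfl)), zero_mul])]
    have : ∀ m : {m : Fin k // β m = t}, g i m.1 * c m.1
        = U t ⟨i, rfl⟩ m * c m.1 := fun m => by rw [hg_eq t i m.1 rfl m.2]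
    rw [Finset.sum_congr rfl (fun m _ => this m)]
    exact congrFun (hU2 t) ⟨i, rfl⟩
  exact ⟨g, hgmem, hcomm, hmv⟩

end AuxLemmas

/-- For any `z, z′ ∈ Ã_{k+1}(a,b)` there is `g ∈ U(k)` stabilizing
`diag(b₁, …, b_k)` with `ι(g) · Z_{(a,b)}(z) · ι(g)* = Z_{(a,b)}(z′)`:
the stabilizer of `diag(b₁, …, b_k)` in `U(k)` acts transitively on `Ã_{k+1}(a,b)`. -/
theorem statement12 (k : ℕ) (hk : 1 ≤ k) (a b : ℕ → ℝ)
    (hab : ∀ i, 1 ≤ i → i ≤ k → b i ≤ a i ∧ a (i + 1) ≤ b i)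
    (z z' : ℕ → ℂ) (hz : z ∈ Atilde k a b) (hz' : z' ∈ Atilde k a b) :
    ∃ g ∈ Matrix.unitaryGroup (Fin k) ℂ,
      g * Matrix.diagonal (fun i : Fin k => (b ((i : ℕ) + 1) : ℂ)) * gᴴ
          = Matrix.diagonal (fun i : Fin k => (b ((i : ℕ) + 1) : ℂ)) ∧
        unitaryEmbed k g * Zab k a b z * (unitaryEmbed k g)ᴴ = Zab k a b z' := by
  classical
  set w : ℝ := (∑ i ∈ Finset.Icc 1 (k + 1), a i) - ∑ i ∈ Finset.Icc 1 k, b i with hw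
  set β : Fin k → ℝ := fun i => b ((i : ℕ) + 1) with hβ
  -- characteristic polynomials
  have hch : ∀ y : ℕ → ℂ, (Zab k a b y).charpoly =
      (X - C (w : ℂ)) * ∏ i : Fin k, (X - C ((β i : ℝ) : ℂ))
        - ∑ i : Fin k, C (y ((i : ℕ) + 1) * (starRingEnd ℂ) (y ((i : ℕ) + 1))) *
            ∏ j ∈ Finset.univ.erase i, (X - C ((β j : ℝ) : ℂ)) := by
    intro y
    rw [Zab, Zarrow_eq, Matrix.charpoly_reindex]
    exact charpoly_fromBlocks_arrow k β w (fun i => y ((i : ℕ) + 1))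
  have heq : (Zab k a b z).charpoly = (Zab k a b z').charpoly := by
    rw [hz, hz']
  rw [hch z, hch z'] at heq
  have hzero : ∑ i : Fin k, C ((z ((i:ℕ)+1) * (starRingEnd ℂ) (z ((i:ℕ)+1)))
      - (z' ((i:ℕ)+1) * (starRingEnd ℂ) (z' ((i:ℕ)+1)))) *
      ∏ j ∈ Finset.univ.erase i, (X - C ((β j : ℝ) : ℂ)) = 0 := by
    have h1 := sub_right_injective heq
    calc ∑ i : Fin k, C ((z ((i:ℕ)+1) * (starRingEnd ℂ) (z ((i:ℕ)+1)))
          - (z' ((i:ℕ)+1) * (starRingEnd ℂ) (z' ((i:ℕ)+1)))) *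
          ∏ j ∈ Finset.univ.erase i, (X - C ((β j : ℝ) : ℂ))
        = (∑ i : Fin k, C (z ((i:ℕ)+1) * (starRingEnd ℂ) (z ((i:ℕ)+1))) *
            ∏ j ∈ Finset.univ.erase i, (X - C ((β j : ℝ) : ℂ)))
          - ∑ i : Fin k, C (z' ((i:ℕ)+1) * (starRingEnd ℂ) (z' ((i:ℕ)+1))) *
            ∏ j ∈ Finset.univ.erase i, (X - C ((β j : ℝ) : ℂ)) := by
          rw [← Finset.sum_sub_distrib]
          apply Finset.sum_congr rfl
          intro i _
          rw [map_sub, sub_mul]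
      _ = 0 := by rw [h1, sub_self]
  -- norm equalities per block
  have hnorm : ∀ t : ℝ,
      ∑ i ∈ Finset.univ.filter (fun i => β i = t),
        Complex.normSq ((starRingEnd ℂ) (z ((i:ℕ)+1)))
      = ∑ i ∈ Finset.univ.filter (fun i => β i = t),
        Complex.normSq ((starRingEnd ℂ) (z' ((i:ℕ)+1))) := by
    intro t
    have hk := keylin β _ hzero t
    have : ∑ i ∈ Finset.univ.filter (fun i => β i = t),
        (((Complex.normSq (z ((i:ℕ)+1)) : ℝ) : ℂ) - ((Complex.normSq (z' ((i:ℕ)+1)) : ℝ) : ℂ)) = 0 := by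
      rw [← hk]
      apply Finset.sum_congr rfl
      intro i _
      rw [Complex.mul_conj, Complex.mul_conj]
    rw [Finset.sum_sub_distrib, sub_eq_zero] at this
    have hreal : ∑ i ∈ Finset.univ.filter (fun i => β i = t), Complex.normSq (z ((i:ℕ)+1))
        = ∑ i ∈ Finset.univ.filter (fun i => β i = t), Complex.normSq (z' ((i:ℕ)+1)) := by
      exact_mod_cast this
    simpa [Complex.normSq_conj] using hreal
  obtain ⟨g, hgmem, hgcomm, hgmv⟩ := exists_block_unitary β
    (fun i => (starRingEnd ℂ) (z ((i:ℕ)+1))) (fun i => (starRingEnd ℂ) (z' ((i:ℕ)+1))) hnorm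
  have hgg : g * star g = 1 := Matrix.mem_unitaryGroup_iff.mp hgmem
  have hdiag : g * Matrix.diagonal (fun i : Fin k => (b ((i : ℕ) + 1) : ℂ)) * gᴴ
      = Matrix.diagonal (fun i : Fin k => (b ((i : ℕ) + 1) : ℂ)) := by
    have : Matrix.diagonal (fun i : Fin k => (b ((i : ℕ) + 1) : ℂ))
        = Matrix.diagonal (fun i : Fin k => ((β i : ℝ) : ℂ)) := rfl
    rw [this, hgcomm, Matrix.mul_assoc, ← Matrix.star_eq_conjTranspose, hgg, Matrix.mul_one]
  refine ⟨g, hgmem, hdiag, ?_⟩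
  -- block computation for the conjugation identity
  have hmulB : g * (Matrix.of fun (i : Fin k) (_ : Fin 1) => (starRingEnd ℂ) (z ((i : ℕ) + 1)))
      = Matrix.of fun (i : Fin k) (_ : Fin 1) => (starRingEnd ℂ) (z' ((i : ℕ) + 1)) := by
    ext i j
    rw [Matrix.mul_apply]
    exact congrFun hgmv i
  have hmulC : (Matrix.of fun (_ : Fin 1) (j : Fin k) => z ((j : ℕ) + 1)) * gᴴ
      = Matrix.of fun (_ : Fin 1) (j : Fin k) => z' ((j : ℕ) + 1) := by
    ext i j
    rw [Matrix.mul_apply]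
    have h1 := congrFun hgmv j
    have h2 : (starRingEnd ℂ) (g.mulVec (fun i => (starRingEnd ℂ) (z ((i:ℕ)+1))) j)
        = (starRingEnd ℂ) ((starRingEnd ℂ) (z' ((j:ℕ)+1))) := congrArg _ h1
    rw [Complex.conj_conj] at h2
    show (∑ m : Fin k, z ((m:ℕ)+1) * gᴴ m j) = z' ((j:ℕ)+1)
    rw [← h2, Matrix.mulVec, dotProduct, map_sum]
    apply Finset.sum_congr rfl
    intro m _
    simp [Matrix.conjTranspose_apply, mul_comm]
  rw [Zab, Zab, Zarrow_eq, Zarrow_eq, unitaryEmbed_eq,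
    Matrix.reindex_apply, Matrix.reindex_apply, Matrix.conjTranspose_submatrix,
    Matrix.submatrix_mul_equiv, Matrix.submatrix_mul_equiv]
  congr 1
  rw [Matrix.fromBlocks_conjTranspose, Matrix.fromBlocks_multiply, Matrix.fromBlocks_multiply]
  simp only [Matrix.mul_zero, Matrix.zero_mul, add_zero, zero_add, Matrix.mul_one,
    Matrix.one_mul, Matrix.conjTranspose_zero, Matrix.conjTranspose_one]
  rw [hdiag, hmulB, hmulC]
  rfl
end

section
/- Let k ≥ 1 and let a₁ ≥ b₁ ≥ a₂ ≥ ⋯ ≥ a_k ≥ b_k ≥ a_{k+1} be real numbers. Let y be a k×k complex Hermitian matrix whose characteristic polynomial equals ∏_{i=1}^{k}(X − b_i), and let g ∈ U(k) satisfy g · y · g* = diag(b₁, …, b_k). Then the map x ↦ ι(g) · x · ι(g)* is a bijection from the set { x : x is a (k+1)×(k+1) complex Hermitian matrix, the characteristic polynomial of x equals ∏_{i=1}^{k+1}(X − a_i), and x^{(k)} = y } onto the set { Z_{(a,b)}(z) : z ∈ Ã_{k+1}(a, b) }. -/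
open Polynomial

open Matrix

/-!
Conjugation by the unitary `ι(g)` is a bijection of the matrix space with inverse conjugation
by `ι(g)*`; it preserves hermiticity and the characteristic polynomial and acts on the leading
`k × k` block as conjugation by `g`. So it carries the matrices in question onto the Hermitian
matrices with characteristic polynomial `∏ (X - aᵢ)` and leading block `g y g* = diag(b)`.
Such a matrix is an arrow matrix, its last row supplying `z`, and comparing traces forces its
corner entry to be `Σ aᵢ - Σ bᵢ`.
-/

namespace Matrix

theorem trace_eq_sum_of_charpoly_eq_prod {R n ι : Type*} [CommRing R] [IsDomain R] [Fintype n]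
    [DecidableEq n] {A : Matrix n n R} {s : Finset ι} {f : ι → R}
    (h : A.charpoly = ∏ i ∈ s, (X - C (f i))) : A.trace = ∑ i ∈ s, f i := by
  have hroots : (∏ i ∈ s, (X - C (f i))).roots = s.val.map f := by
    simpa [Multiset.map_map, Function.comp_def] using roots_multiset_prod_X_sub_C (s.val.map f)
  rw [trace_eq_sum_roots_charpoly_of_splits (h ▸ Splits.prod fun i _ => Splits.X_sub_C (f i)), h,
    hroots]
  rfl

lemma trace_eq_trace_submatrix_castSucc_add {R : Type*} [AddCommMonoid R] {k : ℕ}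
    (m : Matrix (Fin (k + 1)) (Fin (k + 1)) R) :
    m.trace = (m.submatrix Fin.castSucc Fin.castSucc).trace + m (Fin.last k) (Fin.last k) := by
  simp [trace, Fin.sum_univ_castSucc]

section Unitary

variable {R n : Type*} [CommRing R] [StarRing R] [Fintype n] [DecidableEq n] {U : Matrix n n R}

lemma charpoly_mul_mul_conjTranspose_of_mem_unitaryGroup (hU : U ∈ unitaryGroup n R)
    (x : Matrix n n R) : (U * x * Uᴴ).charpoly = x.charpoly := by
  rw [charpoly_mul_comm, ← Matrix.mul_assoc, ← star_eq_conjTranspose,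
    Unitary.star_mul_self_of_mem hU, Matrix.one_mul]

lemma mul_conjTranspose_mul_mul_of_mem_unitaryGroup (hU : U ∈ unitaryGroup n R)
    (x : Matrix n n R) : U * (Uᴴ * x * U) * Uᴴ = x := by
  have hUU : U * Uᴴ = 1 := Unitary.mul_star_self_of_mem hU
  rw [← Matrix.mul_assoc, ← Matrix.mul_assoc, hUU, Matrix.one_mul, Matrix.mul_assoc, hUU,
    Matrix.mul_one]

end Unitary

end Matrix

lemma Fin.ofNat_val_eq_castSucc {k : ℕ} (j : Fin k) : Fin.ofNat (k + 1) j = j.castSucc :=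
  Fin.ext (Nat.mod_eq_of_lt (by omega))

lemma Fin.sum_univ_add_one_eq_sum_Icc {M : Type*} [AddCommMonoid M] (k : ℕ) (f : ℕ → M) :
    ∑ i : Fin k, f ((i : ℕ) + 1) = ∑ i ∈ Finset.Icc 1 k, f i := by
  rw [Fin.sum_univ_eq_sum_range (fun i => f (i + 1)), Finset.range_eq_Ico, Finset.sum_Ico_add',
    zero_add, Finset.Ico_add_one_right_eq_Icc]

section UnitaryEmbed

variable {k : ℕ}

@[simp] lemma unitaryEmbed_castSucc_castSucc (g : Matrix (Fin k) (Fin k) ℂ) (i j : Fin k) :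
    unitaryEmbed k g i.castSucc j.castSucc = g i j := by
  simp [unitaryEmbed]

@[simp] lemma unitaryEmbed_castSucc_last (g : Matrix (Fin k) (Fin k) ℂ) (i : Fin k) :
    unitaryEmbed k g i.castSucc (Fin.last k) = 0 := by
  simp [unitaryEmbed]

@[simp] lemma unitaryEmbed_last_castSucc (g : Matrix (Fin k) (Fin k) ℂ) (j : Fin k) :
    unitaryEmbed k g (Fin.last k) j.castSucc = 0 := by
  simp [unitaryEmbed]

@[simp] lemma unitaryEmbed_last_last (g : Matrix (Fin k) (Fin k) ℂ) :
    unitaryEmbed k g (Fin.last k) (Fin.last k) = 1 := by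
  simp [unitaryEmbed]

@[simp] lemma unitaryEmbed_mul_apply_castSucc (g : Matrix (Fin k) (Fin k) ℂ)
    (M : Matrix (Fin (k + 1)) (Fin (k + 1)) ℂ) (i : Fin k) (j : Fin (k + 1)) :
    (unitaryEmbed k g * M) i.castSucc j = ∑ p, g i p * M p.castSucc j := by
  simp [mul_apply, Fin.sum_univ_castSucc]

@[simp] lemma unitaryEmbed_mul_apply_last (g : Matrix (Fin k) (Fin k) ℂ)
    (M : Matrix (Fin (k + 1)) (Fin (k + 1)) ℂ) (j : Fin (k + 1)) :
    (unitaryEmbed k g * M) (Fin.last k) j = M (Fin.last k) j := by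
  simp [mul_apply, Fin.sum_univ_castSucc]

@[simp] lemma mul_unitaryEmbed_apply_castSucc (g : Matrix (Fin k) (Fin k) ℂ)
    (M : Matrix (Fin (k + 1)) (Fin (k + 1)) ℂ) (i : Fin (k + 1)) (j : Fin k) :
    (M * unitaryEmbed k g) i j.castSucc = ∑ p, M i p.castSucc * g p j := by
  simp [mul_apply, Fin.sum_univ_castSucc]

@[simp] lemma mul_unitaryEmbed_apply_last (g : Matrix (Fin k) (Fin k) ℂ)
    (M : Matrix (Fin (k + 1)) (Fin (k + 1)) ℂ) (i : Fin (k + 1)) :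
    (M * unitaryEmbed k g) i (Fin.last k) = M i (Fin.last k) := by
  simp [mul_apply, Fin.sum_univ_castSucc]

lemma unitaryEmbed_mul (g h : Matrix (Fin k) (Fin k) ℂ) :
    unitaryEmbed k g * unitaryEmbed k h = unitaryEmbed k (g * h) := by
  ext i j
  induction i using Fin.lastCases <;> induction j using Fin.lastCases <;>
    simp [mul_apply_eq_vecMul, vecMul, dotProduct]

lemma unitaryEmbed_one : unitaryEmbed k (1 : Matrix (Fin k) (Fin k) ℂ) = 1 := by
  ext i j
  induction i using Fin.lastCases <;> induction j using Fin.lastCases <;>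
    simp [one_apply, Fin.castSucc_ne_last, (Fin.castSucc_ne_last _).symm]

lemma conjTranspose_unitaryEmbed (g : Matrix (Fin k) (Fin k) ℂ) :
    (unitaryEmbed k g)ᴴ = unitaryEmbed k gᴴ := by
  ext i j
  induction i using Fin.lastCases <;> induction j using Fin.lastCases <;> simp

lemma unitaryEmbed_mem_unitaryGroup {g : Matrix (Fin k) (Fin k) ℂ}
    (hg : g ∈ unitaryGroup (Fin k) ℂ) : unitaryEmbed k g ∈ unitaryGroup (Fin (k + 1)) ℂ := by
  rw [mem_unitaryGroup_iff, star_eq_conjTranspose, conjTranspose_unitaryEmbed, unitaryEmbed_mul,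
    ← star_eq_conjTranspose, mem_unitaryGroup_iff.mp hg, unitaryEmbed_one]

lemma submatrix_castSucc_unitaryEmbed_mul_mul (g h : Matrix (Fin k) (Fin k) ℂ)
    (x : Matrix (Fin (k + 1)) (Fin (k + 1)) ℂ) :
    (unitaryEmbed k g * x * unitaryEmbed k h).submatrix Fin.castSucc Fin.castSucc =
      g * x.submatrix Fin.castSucc Fin.castSucc * h := by
  ext i j
  simp only [submatrix_apply, mul_unitaryEmbed_apply_castSucc, unitaryEmbed_mul_apply_castSucc]
  simp [mul_apply]

lemma bijOn_unitaryEmbed_conj {g : Matrix (Fin k) (Fin k) ℂ} (hg : g ∈ unitaryGroup (Fin k) ℂ)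
    (p : ℂ[X]) (y : Matrix (Fin k) (Fin k) ℂ) :
    Set.BijOn (fun x => unitaryEmbed k g * x * (unitaryEmbed k g)ᴴ)
      {x | x.IsHermitian ∧ x.charpoly = p ∧ x.submatrix Fin.castSucc Fin.castSucc = y}
      {m | m.IsHermitian ∧ m.charpoly = p ∧
        m.submatrix Fin.castSucc Fin.castSucc = g * y * gᴴ} := by
  have hG := unitaryEmbed_mem_unitaryGroup hg
  have hGstar : (unitaryEmbed k g)ᴴ ∈ unitaryGroup (Fin (k + 1)) ℂ := Unitary.star_mem hG
  refine Set.InvOn.bijOn (f' := fun m => (unitaryEmbed k g)ᴴ * m * unitaryEmbed k g)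
    ⟨fun x _ => ?_, fun m _ => mul_conjTranspose_mul_mul_of_mem_unitaryGroup hG m⟩ ?_ ?_
  · simpa using mul_conjTranspose_mul_mul_of_mem_unitaryGroup hGstar x
  · rintro x ⟨hx, hxp, hxy⟩
    refine ⟨isHermitian_mul_mul_conjTranspose _ hx,
      (charpoly_mul_mul_conjTranspose_of_mem_unitaryGroup hG x).trans hxp, ?_⟩
    rw [conjTranspose_unitaryEmbed, submatrix_castSucc_unitaryEmbed_mul_mul, hxy]
  · rintro m ⟨hm, hmp, hmy⟩
    refine ⟨?_, ?_, ?_⟩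
    · simpa using isHermitian_mul_mul_conjTranspose (unitaryEmbed k g)ᴴ hm
    · simpa using (charpoly_mul_mul_conjTranspose_of_mem_unitaryGroup hGstar m).trans hmp
    · rw [conjTranspose_unitaryEmbed, submatrix_castSucc_unitaryEmbed_mul_mul, hmy]
      simpa using mul_conjTranspose_mul_mul_of_mem_unitaryGroup (U := gᴴ) (Unitary.star_mem hg) y

end UnitaryEmbed

section Zarrow

variable {k : ℕ} {b : ℕ → ℝ} {w : ℝ} {z : ℕ → ℂ}

@[simp] lemma Zarrow_castSucc_castSucc (i j : Fin k) :
    Zarrow k b w z i.castSucc j.castSucc =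
      diagonal (fun i : Fin k => (b ((i : ℕ) + 1) : ℂ)) i j := by
  simp [Zarrow, diagonal_apply]

@[simp] lemma Zarrow_castSucc_last (i : Fin k) :
    Zarrow k b w z i.castSucc (Fin.last k) = starRingEnd ℂ (z ((i : ℕ) + 1)) := by
  simp [Zarrow]

@[simp] lemma Zarrow_last_castSucc (j : Fin k) :
    Zarrow k b w z (Fin.last k) j.castSucc = z ((j : ℕ) + 1) := by
  simp [Zarrow]

@[simp] lemma Zarrow_last_last : Zarrow k b w z (Fin.last k) (Fin.last k) = w := by
  simp [Zarrow]

lemma Zarrow_submatrix_castSucc :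
    (Zarrow k b w z).submatrix Fin.castSucc Fin.castSucc =
      diagonal fun i : Fin k => (b ((i : ℕ) + 1) : ℂ) := by
  ext i j
  simp

lemma isHermitian_Zarrow : (Zarrow k b w z).IsHermitian := by
  ext i j
  induction i using Fin.lastCases <;> induction j using Fin.lastCases
  case cast.cast i j =>
    rcases eq_or_ne i j with rfl | h
    · simp
    · simp [h, h.symm]
  all_goals simp

lemma eq_Zarrow_of_isHermitian {m : Matrix (Fin (k + 1)) (Fin (k + 1)) ℂ} (hm : m.IsHermitian)
    (hdiag : m.submatrix Fin.castSucc Fin.castSucc =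
      diagonal fun i : Fin k => (b ((i : ℕ) + 1) : ℂ))
    (hlast : m (Fin.last k) (Fin.last k) = w) :
    m = Zarrow k b w fun n => m (Fin.last k) (Fin.ofNat (k + 1) (n - 1)) := by
  ext i j
  induction i using Fin.lastCases <;> induction j using Fin.lastCases
  case last.last => simpa using hlast
  case last.cast j => rw [Zarrow_last_castSucc, Nat.add_sub_cancel, Fin.ofNat_val_eq_castSucc]
  case cast.last i =>
    rw [Zarrow_castSucc_last, Nat.add_sub_cancel, Fin.ofNat_val_eq_castSucc, ← hm.apply]; rfl
  case cast.cast i j => simpa using congrFun (congrFun hdiag i) j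

end Zarrow

lemma image_Zab_Atilde (k : ℕ) (a b : ℕ → ℝ) :
    Zab k a b '' Atilde k a b =
      {m | m.IsHermitian ∧ m.charpoly = ∏ i ∈ Finset.Icc 1 (k + 1), (X - C (a i : ℂ)) ∧
        m.submatrix Fin.castSucc Fin.castSucc =
          diagonal fun i : Fin k => (b ((i : ℕ) + 1) : ℂ)} := by
  ext m
  constructor
  · rintro ⟨z, hz, rfl⟩
    exact ⟨isHermitian_Zarrow, hz, Zarrow_submatrix_castSucc⟩
  · rintro ⟨hm, hmp, hmb⟩
    have hcorner : m (Fin.last k) (Fin.last k) =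
        (((∑ i ∈ Finset.Icc 1 (k + 1), a i) - ∑ i ∈ Finset.Icc 1 k, b i : ℝ) : ℂ) := by
      have htrace := trace_eq_sum_of_charpoly_eq_prod hmp
      rw [trace_eq_trace_submatrix_castSucc_add, hmb, trace_diagonal,
        Fin.sum_univ_add_one_eq_sum_Icc k (fun i => (b i : ℂ))] at htrace
      push_cast
      linear_combination htrace
    have hZ := eq_Zarrow_of_isHermitian hm hmb hcorner
    refine ⟨_, ?_, hZ.symm⟩
    rwa [Atilde, Set.mem_ofPred_eq, Zab, ← hZ]

theorem statement13_general (k : ℕ) (a b : ℕ → ℝ)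
    (y : Matrix (Fin k) (Fin k) ℂ)
    (g : Matrix (Fin k) (Fin k) ℂ) (hg : g ∈ Matrix.unitaryGroup (Fin k) ℂ)
    (hgy : g * y * gᴴ = Matrix.diagonal fun i : Fin k => (b ((i : ℕ) + 1) : ℂ)) :
    Set.BijOn (fun x => unitaryEmbed k g * x * (unitaryEmbed k g)ᴴ)
      {x : Matrix (Fin (k + 1)) (Fin (k + 1)) ℂ |
        x.IsHermitian ∧
        x.charpoly = ∏ i ∈ Finset.Icc 1 (k + 1), (X - C (a i : ℂ)) ∧
        x.submatrix Fin.castSucc Fin.castSucc = y}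
      {m : Matrix (Fin (k + 1)) (Fin (k + 1)) ℂ | ∃ z ∈ Atilde k a b, Zab k a b z = m} := by
  have hbij := bijOn_unitaryEmbed_conj hg (∏ i ∈ Finset.Icc 1 (k + 1), (X - C (a i : ℂ))) y
  rw [hgy, ← image_Zab_Atilde] at hbij
  exact hbij

/-- Let `y` be a `k × k` Hermitian matrix with characteristic polynomial
`∏_{i=1}^{k}(X − bᵢ)` and `g ∈ U(k)` with `g y g* = diag(b₁, …, b_k)`.  Then
`x ↦ ι(g) x ι(g)*` is a bijection from the set of `(k+1) × (k+1)` Hermitian matrices with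
characteristic polynomial `∏_{i=1}^{k+1}(X − aᵢ)` and `k × k` leading principal submatrix `y`
onto `{ Z_{(a,b)}(z) : z ∈ Ã_{k+1}(a,b) }`. -/
theorem statement13 (k : ℕ) (hk : 1 ≤ k) (a b : ℕ → ℝ)
    (hab : ∀ i, 1 ≤ i → i ≤ k → b i ≤ a i ∧ a (i + 1) ≤ b i)
    (y : Matrix (Fin k) (Fin k) ℂ) (hy : y.IsHermitian)
    (hyb : y.charpoly = ∏ i ∈ Finset.Icc 1 k, (X - C (b i : ℂ)))
    (g : Matrix (Fin k) (Fin k) ℂ) (hg : g ∈ Matrix.unitaryGroup (Fin k) ℂ)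
    (hgy : g * y * gᴴ = Matrix.diagonal fun i : Fin k => (b ((i : ℕ) + 1) : ℂ)) :
    Set.BijOn (fun x => unitaryEmbed k g * x * (unitaryEmbed k g)ᴴ)
      {x : Matrix (Fin (k + 1)) (Fin (k + 1)) ℂ |
        x.IsHermitian ∧
        x.charpoly = ∏ i ∈ Finset.Icc 1 (k + 1), (X - C (a i : ℂ)) ∧
        x.submatrix Fin.castSucc Fin.castSucc = y}
      {m : Matrix (Fin (k + 1)) (Fin (k + 1)) ℂ | ∃ z ∈ Atilde k a b, Zab k a b z = m} :=
  statement13_general k a b y g hg hgy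
end

section
/- Let Γ be the ladder diagram associated with integers 0 = n₀ < n₁ < ⋯ < n_r < n_{r+1} = n, let γ be a face of Γ, and suppose the L-shaped block L_k(p,q) is rigid in γ. Let Q_k(p,q) := ⋃_{0 ≤ i, j ≤ k−1} □^{(p+i, q+j)} = [p−1, p+k−1] × [q−1, q+k−1] be the k×k square of unit boxes containing L_k(p,q). Then no edge of γ lies in the interior of Q_k(p,q); i.e., for no edge e of γ are both unit boxes adjacent to e contained in Q_k(p,q). -/
/-- A grid edge, encoded by its lower-left endpoint together with its direction:
`(v, false)` is the horizontal edge from `v` to `v + (1, 0)`, and `(v, true)` is the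
vertical edge from `v` to `v + (0, 1)`. -/
abbrev GridEdge := (ℤ × ℤ) × Bool

/-- The unit step of an edge direction. -/
def edir : Bool → ℤ × ℤ
  | false => (1, 0)
  | true => (0, 1)

/-- The vertex set of the ladder diagram `Γ(n₁, …, n_r; n)`:
`V = ⋃_{j=0}^{r} (([n_j, n_{j+1}] × [0, n − n_{j+1}]) ∩ ℤ²)`. -/
def ladderV (r n : ℕ) (nseq : ℕ → ℕ) : Set (ℤ × ℤ) :=
  {v | ∃ j ≤ r, (nseq j : ℤ) ≤ v.1 ∧ v.1 ≤ (nseq (j + 1) : ℤ) ∧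
        0 ≤ v.2 ∧ v.2 ≤ (n : ℤ) - (nseq (j + 1) : ℤ)}

/-- A positive path on the ladder diagram: a lattice path `p 0, p 1, …, p n` starting at the
origin, each step increasing one coordinate by `1`, all of whose vertices lie in the ladder
diagram.  (Such a path is exactly a shortest path in the ladder diagram from the origin to a
top vertex, since `p n` automatically has coordinate sum `n`.) -/
def IsPositivePath (r n : ℕ) (nseq : ℕ → ℕ) (p : ℕ → ℤ × ℤ) : Prop :=
  p 0 = (0, 0) ∧
    (∀ i < n, p (i + 1) = p i + edir false ∨ p (i + 1) = p i + edir true) ∧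
    (∀ i ≤ n, p i ∈ ladderV r n nseq)

/-- The set of grid edges traversed by a path of length `n`. -/
def pathEdges (n : ℕ) (p : ℕ → ℤ × ℤ) : Set GridEdge :=
  {e | ∃ i < n, p i = e.1 ∧ p (i + 1) = e.1 + edir e.2}

/-- A face `γ` of the ladder diagram, encoded by its edge set `E`: a union of positive paths
which contains all top vertices (every edge of `E` lies on a positive path whose edges all
belong to `E`, and every top vertex is the endpoint of such a path). -/
def IsFaceOf (r n : ℕ) (nseq : ℕ → ℕ) (E : Set GridEdge) : Prop :=
  (∀ e ∈ E, ∃ p, IsPositivePath r n nseq p ∧ e ∈ pathEdges n p ∧ pathEdges n p ⊆ E) ∧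
    (∀ v ∈ ladderV r n nseq, v.1 + v.2 = (n : ℤ) →
      ∃ p, IsPositivePath r n nseq p ∧ pathEdges n p ⊆ E ∧ p n = v)

/-- The first of the two unit boxes adjacent to a grid edge, encoded by its top-right
lattice point. -/
def adjBox1 (e : GridEdge) : ℤ × ℤ :=
  match e.2 with
  | false => (e.1.1 + 1, e.1.2)
  | true => (e.1.1, e.1.2 + 1)

/-- The second of the two unit boxes adjacent to a grid edge, encoded by its top-right
lattice point. -/
def adjBox2 (e : GridEdge) : ℤ × ℤ := (e.1.1 + 1, e.1.2 + 1)

/-- A grid edge lies in the interior of a region (a union of closed unit boxes, encoded by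
the set `R` of top-right lattice points of its boxes) iff both adjacent unit boxes belong
to the region. -/
def EdgeInInterior (R : ℤ × ℤ → Prop) (e : GridEdge) : Prop :=
  R (adjBox1 e) ∧ R (adjBox2 e)

/-- Membership of the unit box with top-right vertex `c` in the `L`-shaped block `L_k(p,q)`:
`L_k(p,q) = ⋃_{i=0}^{k−1} (□^{(p, q+i)} ∪ □^{(p+i, q)})`. -/
def InLBlock (k : ℕ) (p q : ℤ) (c : ℤ × ℤ) : Prop :=
  (c.1 = p ∧ q ≤ c.2 ∧ c.2 ≤ q + (k : ℤ) - 1) ∨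
    (c.2 = q ∧ p ≤ c.1 ∧ c.1 ≤ p + (k : ℤ) - 1)

/-- `L_k(p,q)` is rigid in the face with edge set `E`: no edge of `E` lies in the interior of
`L_k(p,q)`, and both the rightmost edge (from `(p+k−1, q−1)` to `(p+k−1, q)`) and the top edge
(from `(p−1, q+k−1)` to `(p, q+k−1)`) of `L_k(p,q)` belong to `E`. -/
def IsRigid (k : ℕ) (p q : ℤ) (E : Set GridEdge) : Prop :=
  (∀ e ∈ E, ¬ EdgeInInterior (InLBlock k p q) e) ∧
    ((p + (k : ℤ) - 1, q - 1), true) ∈ E ∧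
    ((p - 1, q + (k : ℤ) - 1), false) ∈ E

/-!
Take an edge `e` of `γ` with both adjacent boxes in `Q_k(p,q)`. If its lower-left endpoint
were on the left or bottom side of the square, `e` would already be interior to the rigid block
`L_k(p,q)`; so that endpoint lies in `[p, p+k−2] × [q, q+k−2]`. A positive path of `γ` through
`e` starts at the origin, which lies outside the quadrant `[p, ∞) × [q, ∞)` because the
rightmost edge of `L_k(p,q)` forces `q ≥ 1`. The step by which the path enters the quadrant
therefore crosses the left or bottom side of `Q_k(p,q)` below or left of the corner
`(p+k−2, q+k−2)`, i.e. it is an edge of `γ` interior to `L_k(p,q)`, contradicting rigidity.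
-/

lemma Nat.exists_lt_not_and_succ {p : ℕ → Prop} (h0 : ¬ p 0) {i : ℕ} (hi : p i) :
    ∃ j < i, ¬ p j ∧ p (j + 1) := by
  obtain ⟨j, hj, hj1, hpj1⟩ :=
    Nat.exists_not_and_succ_of_not_zero_of_exists (p := fun m => m ≤ i ∧ p m)
      (fun h => h0 h.2) ⟨i, le_rfl, hi⟩
  exact ⟨j, hj1, fun hpj => hj ⟨Nat.le_of_succ_le hj1, hpj⟩, hpj1⟩

def IsUpRightPath (n : ℕ) (P : ℕ → ℤ × ℤ) : Prop :=
  ∀ i < n, P (i + 1) = P i + edir false ∨ P (i + 1) = P i + edir true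

namespace IsUpRightPath

variable {n : ℕ} {P : ℕ → ℤ × ℤ}

lemma exists_step (hP : IsUpRightPath n P) {i : ℕ} (hi : i < n) :
    ∃ d, P (i + 1) = P i + edir d :=
  (hP i hi).elim (⟨false, ·⟩) (⟨true, ·⟩)

lemma monotoneOn (hP : IsUpRightPath n P) : MonotoneOn P (Set.Iic n) := by
  refine monotoneOn_of_le_add_one Set.ordConnected_Iic fun i _ _ hi => ?_
  obtain ⟨d, hd⟩ := hP.exists_step (Nat.succ_le_iff.mp hi)
  rw [hd]
  cases d <;> simp [edir, Prod.le_def]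

end IsUpRightPath

lemma IsPositivePath.isUpRightPath {r n : ℕ} {nseq : ℕ → ℕ} {P : ℕ → ℤ × ℤ}
    (hP : IsPositivePath r n nseq P) : IsUpRightPath n P :=
  hP.2.1

lemma snd_nonneg_of_mem_ladderV {r n : ℕ} {nseq : ℕ → ℕ} {v : ℤ × ℤ}
    (hv : v ∈ ladderV r n nseq) : 0 ≤ v.2 := by
  obtain ⟨_, _, _, _, h, _⟩ := hv
  exact h

lemma IsFaceOf.fst_mem_ladderV {r n : ℕ} {nseq : ℕ → ℕ} {E : Set GridEdge}
    (hE : IsFaceOf r n nseq E) {e : GridEdge} (he : e ∈ E) : e.1 ∈ ladderV r n nseq := by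
  obtain ⟨P, hP, ⟨i, hi, hPi, -⟩, -⟩ := hE.1 e he
  exact hPi ▸ hP.2.2 i hi.le

/-- The box set of `Q_k(p,q) = [p−1, p+k−1] × [q−1, q+k−1]`, by top-right corners. -/
def InSquare (k : ℕ) (p q : ℤ) (c : ℤ × ℤ) : Prop :=
  p ≤ c.1 ∧ c.1 ≤ p + (k : ℤ) - 1 ∧ q ≤ c.2 ∧ c.2 ≤ q + (k : ℤ) - 1

section Geometry

variable {k : ℕ} {p q : ℤ}

lemma base_mem_of_edgeInInterior_inSquare {e : GridEdge}
    (hQ : EdgeInInterior (InSquare k p q) e) (hL : ¬ EdgeInInterior (InLBlock k p q) e) :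
    (p, q) ≤ e.1 ∧ e.1 ≤ (p + k - 2, q + k - 2) := by
  obtain ⟨⟨a, b⟩, d⟩ := e
  cases d <;>
    simp only [EdgeInInterior, InSquare, InLBlock, adjBox1, adjBox2, Prod.mk_le_mk] at * <;>
    omega

lemma edgeInInterior_inLBlock_of_entry {w : ℤ × ℤ} {d : Bool}
    (hout : ¬ (p, q) ≤ w) (hin : (p, q) ≤ w + edir d) (hle : w ≤ (p + k - 2, q + k - 2)) :
    EdgeInInterior (InLBlock k p q) (w, d) := by
  obtain ⟨a, b⟩ := w
  cases d <;>
    simp only [EdgeInInterior, InLBlock, adjBox1, adjBox2, edir, Prod.mk_add_mk,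
      Prod.mk_le_mk] at * <;>
    omega

end Geometry

theorem statement15_general (r n : ℕ) (nseq : ℕ → ℕ)
    (E : Set GridEdge) (hE : IsFaceOf r n nseq E)
    (k : ℕ) (p q : ℤ) (hrigid : IsRigid k p q E) :
    ∀ e ∈ E, ¬ EdgeInInterior
      (fun c => p ≤ c.1 ∧ c.1 ≤ p + (k : ℤ) - 1 ∧ q ≤ c.2 ∧ c.2 ≤ q + (k : ℤ) - 1) e := by
  obtain ⟨hL, hright, -⟩ := hrigid
  have hq : 0 < q := by
    have := snd_nonneg_of_mem_ladderV (hE.fst_mem_ladderV hright)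
    dsimp only at this
    omega
  intro e he hQ
  obtain ⟨hpq, hcorner⟩ := base_mem_of_edgeInInterior_inSquare hQ (hL e he)
  obtain ⟨P, hP, ⟨i, hi, hPi, -⟩, hPE⟩ := hE.1 e he
  have hout : ¬ (p, q) ≤ P 0 := by
    rw [hP.1, Prod.mk_le_mk]
    omega
  obtain ⟨j, hji, hj_out, hj_in⟩ :=
    Nat.exists_lt_not_and_succ (p := fun m => (p, q) ≤ P m) hout (hPi ▸ hpq)
  have hjn : j < n := hji.trans hi
  obtain ⟨d, hd⟩ := hP.isUpRightPath.exists_step hjn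
  have hj_le : P j ≤ e.1 := hPi ▸ hP.isUpRightPath.monotoneOn hjn.le hi.le hji.le
  exact hL _ (hPE ⟨j, hjn, rfl, hd⟩)
    (edgeInInterior_inLBlock_of_entry hj_out (hd ▸ hj_in) (hj_le.trans hcorner))

/-- Let `Γ` be the ladder diagram associated with
`0 = n₀ < n₁ < ⋯ < n_r < n_{r+1} = n`, let `γ` (with edge set `E`) be a face of `Γ`, and
suppose `L_k(p,q)` is rigid in `γ`.  Then no edge of `γ` lies in the interior of the `k × k`
square `Q_k(p,q) = [p−1, p+k−1] × [q−1, q+k−1]` of unit boxes containing `L_k(p,q)`. -/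
theorem statement15 (r n : ℕ) (nseq : ℕ → ℕ)
    (h0 : nseq 0 = 0) (hlast : nseq (r + 1) = n)
    (hmono : ∀ j ≤ r, nseq j < nseq (j + 1))
    (E : Set GridEdge) (hE : IsFaceOf r n nseq E)
    (k : ℕ) (hk : 1 ≤ k) (p q : ℤ) (hrigid : IsRigid k p q E) :
    ∀ e ∈ E, ¬ EdgeInInterior
      (fun c => p ≤ c.1 ∧ c.1 ≤ p + (k : ℤ) - 1 ∧ q ≤ c.2 ∧ c.2 ≤ q + (k : ℤ) - 1) e :=
  statement15_general r n nseq E hE k p q hrigid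
end

section
/- Let Γ be the ladder diagram associated with integers 0 = n₀ < n₁ < ⋯ < n_r < n_{r+1} = n and let γ be a face of Γ. If L_i(a,b) and L_j(c,d) are two distinct L-shaped blocks (i.e., (i, a, b) ≠ (j, c, d)) that are both rigid in γ, then their interiors are disjoint; equivalently, there is no unit box □^{(x,y)} contained in both L_i(a,b) and L_j(c,d). -/
/-! A positive path starts at the origin and moves monotonically, so to reach a lattice point
of the square `[p, p+k-2] × [q, q+k-2]` enclosed by the block `L_k(p,q)` (with `p ≥ 1`) it must
step into the quadrant above `(p, q)`, and that step crosses an edge interior to the block.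
Hence no edge of a face has an endpoint in the enclosed square of a rigid block. If two
distinct rigid blocks shared a box, then the top or rightmost edge of one of them would either
lie in the interior of the other block or have an endpoint in the square it encloses. -/

theorem exists_lt_not_le_and_le_succ {α : Type*} [Preorder α] {p : ℕ → α} {v : α} {t : ℕ}
    (hp : ∀ s < t, p s ≤ p (s + 1)) (h0 : ¬ v ≤ p 0) (ht : v ≤ p t) :
    ∃ s < t, ¬ v ≤ p s ∧ v ≤ p (s + 1) ∧ p (s + 1) ≤ p t := by
  induction t with
  | zero => exact absurd ht h0
  | succ t ih =>
    by_cases hvt : v ≤ p t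
    · obtain ⟨s, hst, hs, hs1, hst1⟩ := ih (fun s hs => hp s (by omega)) hvt
      exact ⟨s, by omega, hs, hs1, hst1.trans (hp t (by omega))⟩
    · exact ⟨t, by omega, hvt, ht, le_rfl⟩

def InLBlockNotch (k : ℕ) (p q : ℤ) (v : ℤ × ℤ) : Prop :=
  p ≤ v.1 ∧ v.1 ≤ p + (k : ℤ) - 2 ∧ q ≤ v.2 ∧ v.2 ≤ q + (k : ℤ) - 2

theorem le_add_edir (v : ℤ × ℤ) (dir : Bool) : v ≤ v + edir dir := by
  cases dir <;> simp [edir, Prod.le_def]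

section Face

variable {r n : ℕ} {nseq : ℕ → ℕ} {E : Set GridEdge}

theorem IsPositivePath.exists_step {p : ℕ → ℤ × ℤ} (hp : IsPositivePath r n nseq p) {s : ℕ}
    (hs : s < n) : ∃ dir, p (s + 1) = p s + edir dir := by
  rcases hp.2.1 s hs with h | h
  exacts [⟨false, h⟩, ⟨true, h⟩]

theorem IsFaceOf.nonneg_of_mem (hE : IsFaceOf r n nseq E) {e : GridEdge} (he : e ∈ E) :
    0 ≤ e.1 := by
  obtain ⟨p, hp, ⟨t, ht, hpt, -⟩, -⟩ := hE.1 e he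
  obtain ⟨j, -, hj, -, hy, -⟩ := hp.2.2 t ht.le
  rw [← hpt]
  exact ⟨(Int.natCast_nonneg _).trans hj, hy⟩

theorem IsPositivePath.not_inLBlockNotch {p : ℕ → ℤ × ℤ} (hp : IsPositivePath r n nseq p)
    (hpE : pathEdges n p ⊆ E) {k : ℕ} {a b : ℤ} (hr : IsRigid k a b E) (ha : 1 ≤ a)
    {t : ℕ} (ht : t ≤ n) : ¬ InLBlockNotch k a b (p t) := by
  rintro ⟨hx1, hx2, hy1, hy2⟩
  have hmono : ∀ s < t, p s ≤ p (s + 1) := fun s hs => by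
    obtain ⟨dir, h⟩ := hp.exists_step (hs.trans_le ht)
    exact h ▸ le_add_edir _ dir
  have h0 : ¬ (a, b) ≤ p 0 := by
    rw [hp.1, Prod.mk_le_mk]
    omega
  obtain ⟨s, hst, hs, hs1, hst1⟩ := exists_lt_not_le_and_le_succ hmono h0 ⟨hx1, hy1⟩
  obtain ⟨dir, hdir⟩ := hp.exists_step (hst.trans_le ht)
  refine hr.1 (p s, dir) (hpE ⟨s, by omega, rfl, hdir⟩) ?_
  rw [hdir] at hs1 hst1
  simp only [Prod.le_def, Prod.fst_add, Prod.snd_add] at hs hs1 hst1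
  cases dir <;>
    simp only [edir, EdgeInInterior, adjBox1, adjBox2, InLBlock] at hs1 hst1 ⊢ <;> omega

theorem IsRigid.not_inLBlockNotch_of_mem (hE : IsFaceOf r n nseq E) {k : ℕ} {a b : ℤ}
    (hr : IsRigid k a b E) {e : GridEdge} (he : e ∈ E) :
    ¬ InLBlockNotch k a b e.1 ∧ ¬ InLBlockNotch k a b (e.1 + edir e.2) := by
  have ha : 1 ≤ a := by simpa using (hE.nonneg_of_mem hr.2.2).1
  obtain ⟨p, hp, ⟨t, ht, hpt, hpt1⟩, hpE⟩ := hE.1 e he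
  exact ⟨hpt ▸ hp.not_inLBlockNotch hpE hr ha ht.le, hpt1 ▸ hp.not_inLBlockNotch hpE hr ha ht⟩

variable {i j : ℕ} {a b c d : ℤ}

theorem IsRigid.false_of_same_column (hE : IsFaceOf r n nseq E) (hr1 : IsRigid i a b E)
    (hr2 : IsRigid j a d E) (hbd : b ≤ d) (hne : (i, b) ≠ (j, d)) {y : ℤ}
    (hy1 : y ≤ b + (i : ℤ) - 1) (hy2 : d ≤ y) (hy3 : y ≤ d + (j : ℤ) - 1) : False := by
  have hT1 := hr2.1 _ hr1.2.2
  have hT2 := hr1.1 _ hr2.2.2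
  have hR2 := (hr1.not_inLBlockNotch_of_mem hE hr2.2.1).1
  have hne' : ¬ (i = j ∧ b = d) := by simpa using hne
  simp only [EdgeInInterior, adjBox1, adjBox2, InLBlock, InLBlockNotch] at hT1 hT2 hR2
  omega

theorem IsRigid.false_of_same_row (hE : IsFaceOf r n nseq E) (hr1 : IsRigid i a b E)
    (hr2 : IsRigid j c b E) (hac : a ≤ c) (hne : (i, a) ≠ (j, c)) {x : ℤ}
    (hx1 : x ≤ a + (i : ℤ) - 1) (hx2 : c ≤ x) (hx3 : x ≤ c + (j : ℤ) - 1) : False := by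
  have hR1 := hr2.1 _ hr1.2.1
  have hR2 := hr1.1 _ hr2.2.1
  have hT2 := (hr1.not_inLBlockNotch_of_mem hE hr2.2.2).1
  have hne' : ¬ (i = j ∧ a = c) := by simpa using hne
  simp only [EdgeInInterior, adjBox1, adjBox2, InLBlock, InLBlockNotch] at hR1 hR2 hT2
  omega

theorem IsRigid.false_of_column_meets_row (hE : IsFaceOf r n nseq E) (hr1 : IsRigid i a b E)
    (hr2 : IsRigid j c d E) (hne : (i, a, b) ≠ (j, c, d)) (hd1 : b ≤ d)
    (hd2 : d ≤ b + (i : ℤ) - 1) (ha1 : c ≤ a) (ha2 : a ≤ c + (j : ℤ) - 1) : False := by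
  rcases hd1.eq_or_lt with rfl | hbd
  · exact hr2.false_of_same_row hE hr1 ha1 (by grind) ha2 le_rfl (by omega)
  rcases ha1.eq_or_lt with rfl | hca
  · exact hr1.false_of_same_column hE hr2 hd1 (by grind) hd2 le_rfl (by omega)
  have hR2 := (hr1.not_inLBlockNotch_of_mem hE hr2.2.1).1
  have hT1 := (hr2.not_inLBlockNotch_of_mem hE hr1.2.2).2
  simp only [InLBlockNotch, edir, Prod.fst_add, Prod.snd_add] at hR2 hT1
  omega

end Face

theorem statement16_general (r n : ℕ) (nseq : ℕ → ℕ)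
    (E : Set GridEdge) (hE : IsFaceOf r n nseq E)
    (i : ℕ) (a b : ℤ) (j : ℕ) (c d : ℤ)
    (hne : (i, a, b) ≠ (j, c, d))
    (hr1 : IsRigid i a b E) (hr2 : IsRigid j c d E) :
    ∀ x : ℤ × ℤ, ¬ (InLBlock i a b x ∧ InLBlock j c d x) := by
  rintro ⟨x, y⟩ ⟨⟨rfl, hb1, hb2⟩ | ⟨rfl, ha1, ha2⟩, ⟨rfl, hd1, hd2⟩ | ⟨rfl, hc1, hc2⟩⟩
  · rcases le_total b d with h | h
    · exact hr1.false_of_same_column hE hr2 h (by grind) hb2 hd1 hd2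
    · exact hr2.false_of_same_column hE hr1 h (by grind) hd2 hb1 hb2
  · exact hr1.false_of_column_meets_row hE hr2 hne hb1 hb2 hc1 hc2
  · exact hr2.false_of_column_meets_row hE hr1 hne.symm hd1 hd2 ha1 ha2
  · rcases le_total a c with h | h
    · exact hr1.false_of_same_row hE hr2 h (by grind) ha2 hc1 hc2
    · exact hr2.false_of_same_row hE hr1 h (by grind) hc2 ha1 ha2

/-- Let `Γ` be the ladder diagram associated with
`0 = n₀ < n₁ < ⋯ < n_r < n_{r+1} = n` and let `γ` (with edge set `E`) be a face of `Γ`.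
If `L_i(a,b)` and `L_j(c,d)` are two distinct `L`-shaped blocks that are both rigid in `γ`,
then their interiors are disjoint: no unit box is contained in both. -/
theorem statement16 (r n : ℕ) (nseq : ℕ → ℕ)
    (h0 : nseq 0 = 0) (hlast : nseq (r + 1) = n)
    (hmono : ∀ j ≤ r, nseq j < nseq (j + 1))
    (E : Set GridEdge) (hE : IsFaceOf r n nseq E)
    (i : ℕ) (hi : 1 ≤ i) (a b : ℤ) (j : ℕ) (hj : 1 ≤ j) (c d : ℤ)
    (hne : (i, a, b) ≠ (j, c, d))
    (hr1 : IsRigid i a b E) (hr2 : IsRigid j c d E) :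
    ∀ x : ℤ × ℤ, ¬ (InLBlock i a b x ∧ InLBlock j c d x) :=
  statement16_general r n nseq E hE i a b j c d hne hr1 hr2
end
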